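/- arXiv:math/0701474 — 3 statements merged into one kernel-verified Lean document; each statement's English description precedes it below -/
import Mathlib

section
/- There exists an absolute constant l such that for any p = p(n) with 1/n < p < 2 ln n/n (d = pn), a.a.s. every connected set S of vertices of G_{n,p} satisfies e(S) ≤ l·d·|S|. Moreover, for every sequence s(n) of natural numbers with s(n) = o((ln n)²), a.a.s. every connected set S with |S| ≤ s(n) satisfies e(S) ≤ 2|S|. -/
open MeasureTheory Finset Filter

noncomputable section

attribute [local instance] Classical.propDecidable

/-- The Bernoulli measure on `Bool` with success probability `p` (truncated to `[0,1]`). -/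
def bernoulliMeasure (p : ℝ) : Measure Bool :=
  (PMF.bernoulli (min (Real.toNNReal p) 1) (min_le_right _ _)).toMeasure

instance (p : ℝ) : IsProbabilityMeasure (bernoulliMeasure p) :=
  PMF.toMeasure.isProbabilityMeasure _

/-- The Erdős–Rényi measure: each (ordered-pair-indexed) coordinate is an independent
Bernoulli(p); the graph only reads the coordinate `(min i j, max i j)`, so each of the
`n(n-1)/2` potential edges is present independently with probability `p`. -/
def gnp (n : ℕ) (p : ℝ) : Measure (Fin n → Fin n → Bool) :=
  Measure.pi fun _ => Measure.pi fun _ => bernoulliMeasure p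

/-- The simple graph on `Fin n` determined by a sample point `ω`. -/
def graphOf {n : ℕ} (ω : Fin n → Fin n → Bool) : SimpleGraph (Fin n) where
  Adj i j := i ≠ j ∧ ω (min i j) (max i j) = true
  symm := by
    constructor
    intro i j h
    exact ⟨h.1.symm, by rw [min_comm, max_comm]; exact h.2⟩
  loopless := by constructor; intro i h; exact h.1 rfl

/-- `d(S)`: the sum of the degrees of the vertices of `S`. -/
def degSum {V : Type*} (G : SimpleGraph V) (S : Finset V) : ℕ :=
  ∑ v ∈ S, (G.neighborSet v).ncard

/-- The sum of degrees over a set of vertices. -/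
def degSumSet {V : Type*} (G : SimpleGraph V) (A : Set V) : ℕ :=
  ∑ᶠ v ∈ A, (G.neighborSet v).ncard

/-- `e(S)`: the number of edges with both endpoints in `S`. -/
def edgesIn {V : Type*} (G : SimpleGraph V) (S : Set V) : ℕ :=
  {e ∈ G.edgeSet | ∀ v ∈ e, v ∈ S}.ncard

/-- `e^out(S)`: the number of edges with exactly one endpoint in `S`. -/
def edgesOut {V : Type*} (G : SimpleGraph V) (S : Set V) : ℕ :=
  {e ∈ G.edgeSet | (∃ v ∈ e, v ∈ S) ∧ (∃ v ∈ e, v ∉ S)}.ncard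

/-- The number of edges with one endpoint in `A` and one in `B` (for disjoint `A`, `B`). -/
def edgesBetween {V : Type*} (G : SimpleGraph V) (A B : Set V) : ℕ :=
  {e ∈ G.edgeSet | ∃ v ∈ e, ∃ w ∈ e, v ∈ A ∧ w ∈ B}.ncard

/-- A set of vertices is connected if the induced subgraph is connected. -/
def connSet {V : Type*} (G : SimpleGraph V) (S : Set V) : Prop :=
  (G.induce S).Connected

/-- `c` is a largest ("giant") connected component. -/
def isGiant {V : Type*} (G : SimpleGraph V) (c : G.ConnectedComponent) : Prop :=
  ∀ c' : G.ConnectedComponent, c'.supp.ncard ≤ c.supp.ncard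

/-- Transition matrix of the simple random walk on `G`. -/
def transMatrix {V : Type*} (G : SimpleGraph V) : Matrix V V ℝ :=
  Matrix.of fun i j => if G.Adj i j then ((G.neighborSet i).ncard : ℝ)⁻¹ else 0

/-- Stationary distribution of the simple random walk on `G`: `π(v) = deg v / (2 |E|)`. -/
def statDist {V : Type*} (G : SimpleGraph V) (v : V) : ℝ :=
  ((G.neighborSet v).ncard : ℝ) / (2 * (G.edgeSet.ncard : ℝ))

/-- Total variation distance between two (signed) distributions on a finite type. -/
def dTV {V : Type*} [Fintype V] (μ ν : V → ℝ) : ℝ :=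
  ⨆ A : Finset V, |∑ v ∈ A, μ v - ∑ v ∈ A, ν v|

/-- `μ` is a probability distribution on the finite type `V`. -/
def IsProbDist {V : Type*} [Fintype V] (μ : V → ℝ) : Prop :=
  (∀ v, 0 ≤ μ v) ∧ ∑ v, μ v = 1

/-- `T_mix`: the supremum over initial distributions of the first time the walk is within
`1/e` of `π` in total variation. -/
def mixTimeP {V : Type*} [Fintype V] [DecidableEq V] (P : Matrix V V ℝ) (pi : V → ℝ) : ℕ :=
  sSup {T : ℕ | ∃ μ, IsProbDist μ ∧
    T = sInf {t : ℕ | dTV (Matrix.vecMul μ (P ^ t)) pi < (Real.exp 1)⁻¹}}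

/-- `T'_mix`: the averaged mixing time, using the Cesàro average `(1/t) ∑_{s<t} P^s`. -/
def avgMixTimeP {V : Type*} [Fintype V] [DecidableEq V] (P : Matrix V V ℝ) (pi : V → ℝ) : ℕ :=
  sSup {T : ℕ | ∃ μ, IsProbDist μ ∧
    T = sInf {t : ℕ |
      dTV (Matrix.vecMul μ ((t : ℝ)⁻¹ • ∑ s ∈ Finset.range t, P ^ s)) pi < (Real.exp 1)⁻¹}}

/-- The mixing time of the simple random walk on the graph `G`. -/
def mixingTime {V : Type*} [Fintype V] [DecidableEq V] (G : SimpleGraph V) : ℕ :=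
  mixTimeP (transMatrix G) (statDist G)

/-- The averaged mixing time of the simple random walk on the graph `G`. -/
def avgMixingTime {V : Type*} [Fintype V] [DecidableEq V] (G : SimpleGraph V) : ℕ :=
  avgMixTimeP (transMatrix G) (statDist G)

/-- `π(S)` for a finite Markov chain. -/
def chainPi {V : Type*} [Fintype V] (pi : V → ℝ) (S : Finset V) : ℝ :=
  ∑ i ∈ S, pi i

/-- `Q(S) = ∑_{i ∈ S, j ∉ S} π(i) P(i,j)`. -/
def chainQ {V : Type*} [Fintype V] [DecidableEq V] (P : Matrix V V ℝ) (pi : V → ℝ)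
    (S : Finset V) : ℝ :=
  ∑ i ∈ S, ∑ j ∈ Sᶜ, pi i * P i j

/-- The conductance `Φ(S) = Q(S)/(π(S) π(Sᶜ))`. -/
def chainPhi {V : Type*} [Fintype V] [DecidableEq V] (P : Matrix V V ℝ) (pi : V → ℝ)
    (S : Finset V) : ℝ :=
  chainQ P pi S / (chainPi pi S * chainPi pi Sᶜ)

/-- The graph on the states with an edge between `i` and `j` when `P i j > 0`
(symmetrized). -/
def chainGraph {V : Type*} (P : Matrix V V ℝ) : SimpleGraph V where
  Adj i j := i ≠ j ∧ (0 < P i j ∨ 0 < P j i)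
  symm := by
    constructor
    intro i j h
    exact ⟨h.1.symm, h.2.symm⟩
  loopless := by constructor; intro i h; exact h.1 rfl

/-- `Φ(x)`: the minimum conductance of a connected set `S` with `x/2 ≤ π(S) ≤ x`
(equal to `1` if no such set exists). -/
def PhiAt {V : Type*} [Fintype V] [DecidableEq V] (P : Matrix V V ℝ) (pi : V → ℝ)
    (x : ℝ) : ℝ :=
  if ∃ S : Finset V, ((chainGraph P).induce (S : Set V)).Connected ∧
      x / 2 ≤ chainPi pi S ∧ chainPi pi S ≤ x then
    sInf {y : ℝ | ∃ S : Finset V, ((chainGraph P).induce (S : Set V)).Connected ∧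
      x / 2 ≤ chainPi pi S ∧ chainPi pi S ≤ x ∧ y = chainPhi P pi S}
  else 1

/-- The minimum conductance `Φ(G)` of the simple random walk on `G`, over sets with
`0 < π(S) ≤ 1/2`. -/
def minConductance {V : Type*} [Fintype V] [DecidableEq V] (G : SimpleGraph V) : ℝ :=
  sInf {y : ℝ | ∃ S : Finset V, 0 < chainPi (statDist G) S ∧
    chainPi (statDist G) S ≤ 1 / 2 ∧ y = chainPhi (transMatrix G) (statDist G) S}

/-- The vertex set of the core (maximal subgraph of minimum degree ≥ 2) of the induced
subgraph of `G` on `W`. -/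
def coreWithin {V : Type*} (G : SimpleGraph V) (W : Set V) : Set V :=
  ⋃₀ {A : Set V | A ⊆ W ∧ ∀ v ∈ A, 2 ≤ (A ∩ G.neighborSet v).ncard}

/-- A dangling tree of `G` on vertex set `A` with root `r`: the induced subgraph on `A`
is a tree and every non-root vertex of `A` has all its `G`-neighbours inside `A`. -/
def IsDanglingTree {V : Type*} (G : SimpleGraph V) (A : Set V) (r : V) : Prop :=
  r ∈ A ∧ (G.induce A).IsTree ∧ ∀ v ∈ A, v ≠ r → G.neighborSet v ⊆ A


section AuxEdgesInConnectedSets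

open scoped ENNReal

lemma esBern_true (p : ℝ) : bernoulliMeasure p {true} = min (ENNReal.ofReal p) 1 := by
  rw [bernoulliMeasure, PMF.toMeasure_apply_singleton _ _ (measurableSet_singleton _)]
  simp [PMF.bernoulli_apply, ENNReal.ofReal]

lemma esGnp_event (n : ℕ) (p : ℝ) (T : Finset (Fin n × Fin n)) :
    gnp n p {ω : Fin n → Fin n → Bool | ∀ q ∈ T, ω q.1 q.2 = true}
      = (min (ENNReal.ofReal p) 1) ^ T.card := by
  classical
  have hset : {ω : Fin n → Fin n → Bool | ∀ q ∈ T, ω q.1 q.2 = true}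
      = Set.pi Set.univ (fun a => Set.pi Set.univ
          (fun b => if (a, b) ∈ T then ({true} : Set Bool) else Set.univ)) := by
    ext ω
    simp only [Set.mem_setOf_eq, Set.mem_pi, Set.mem_univ, forall_true_left]
    constructor
    · intro h a b
      split_ifs with hab
      · exact h (a, b) hab
      · trivial
    · intro h q hq
      have := h q.1 q.2
      rw [if_pos (by simpa using hq)] at this
      simpa using this
  rw [hset, gnp, Measure.pi_pi]
  have inner : ∀ a : Fin n,
      (Measure.pi fun _ : Fin n => bernoulliMeasure p)
        (Set.pi Set.univ (fun b => if (a, b) ∈ T then ({true} : Set Bool) else Set.univ))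
      = ∏ b : Fin n, (if (a, b) ∈ T then min (ENNReal.ofReal p) 1 else 1) := by
    intro a
    rw [Measure.pi_pi]
    refine Finset.prod_congr rfl fun b _ => ?_
    split_ifs
    · exact esBern_true p
    · exact measure_univ
  simp_rw [inner]
  rw [← Finset.prod_product']
  have hite : ∀ q : Fin n × Fin n,
      (if (q.1, q.2) ∈ T then min (ENNReal.ofReal p) 1 else 1)
        = (if q ∈ T then min (ENNReal.ofReal p) 1 else 1) := by
    intro q; simp
  rw [Finset.prod_congr rfl fun q _ => hite q, Finset.univ_product_univ,
    Finset.prod_ite_mem, Finset.univ_inter, Finset.prod_const]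

def esPairs {n : ℕ} (S : Finset (Fin n)) : Finset (Fin n × Fin n) :=
  (S ×ˢ S).filter fun q => q.1 < q.2

lemma esEdgesIn_eq {n : ℕ} (ω : Fin n → Fin n → Bool) (S : Finset (Fin n)) :
    edgesIn (graphOf ω) ↑S = ((esPairs S).filter fun q => ω q.1 q.2 = true).card := by
  classical
  set F := (esPairs S).filter fun q => ω q.1 q.2 = true with hF
  have hgadj : ∀ a b : Fin n, (graphOf ω).Adj a b ↔ a ≠ b ∧ ω (min a b) (max a b) = true := by
    intro a b; rfl
  have hset : {e ∈ (graphOf ω).edgeSet | ∀ v ∈ e, v ∈ (S : Set (Fin n))}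
      = ↑(F.image (fun q : Fin n × Fin n => s(q.1, q.2))) := by
    ext e
    induction e with
    | _ a b =>
      simp only [Set.mem_setOf_eq, Finset.coe_image, Set.mem_image, Finset.mem_coe]
      constructor
      · rintro ⟨hadj, hmem⟩
        rw [SimpleGraph.mem_edgeSet, hgadj] at hadj
        obtain ⟨hne, hω⟩ := hadj
        have ha : a ∈ S := hmem a (Sym2.mem_mk_left a b)
        have hb : b ∈ S := hmem b (Sym2.mem_mk_right a b)
        refine ⟨(min a b, max a b), ?_, ?_⟩
        · rw [hF, Finset.mem_filter, esPairs, Finset.mem_filter, Finset.mem_product]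
          refine ⟨⟨⟨?_, ?_⟩, min_lt_max.mpr hne⟩, hω⟩
          · rcases min_cases a b with ⟨h, _⟩ | ⟨h, _⟩ <;> simp [h, ha, hb]
          · rcases max_cases a b with ⟨h, _⟩ | ⟨h, _⟩ <;> simp [h, ha, hb]
        · rcases le_total a b with h | h
          · rw [min_eq_left h, max_eq_right h]
          · rw [min_eq_right h, max_eq_left h]
            exact Sym2.eq_swap
      · rintro ⟨q, hq, heq⟩
        rw [← heq]
        rw [hF, Finset.mem_filter, esPairs, Finset.mem_filter, Finset.mem_product] at hq
        obtain ⟨⟨⟨h1, h2⟩, hlt⟩, hω⟩ := hq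
        refine ⟨?_, ?_⟩
        · rw [SimpleGraph.mem_edgeSet, hgadj]
          exact ⟨ne_of_lt hlt, by rwa [min_eq_left hlt.le, max_eq_right hlt.le]⟩
        · intro v hv
          rcases Sym2.mem_iff.mp hv with rfl | rfl
          · exact h1
          · exact h2
  rw [edgesIn, hset, Set.ncard_coe_finset]
  refine Finset.card_image_of_injOn ?_
  intro q hq q' hq' heq
  have hqlt : q.1 < q.2 := (Finset.mem_filter.mp ((Finset.mem_filter.mp hq).1)).2
  have hq'lt : q'.1 < q'.2 := (Finset.mem_filter.mp ((Finset.mem_filter.mp hq').1)).2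
  rcases Sym2.eq_iff.mp heq with ⟨h1, h2⟩ | ⟨h1, h2⟩
  · exact Prod.ext h1 h2
  · exfalso; rw [h1, h2] at hqlt; exact absurd (hqlt.trans hq'lt) (lt_irrefl _)

lemma esUnion_bound (n : ℕ) (p : ℝ) (m : ℕ → ℕ) :
    gnp n p {ω | ∃ S : Finset (Fin n), m S.card ≤ edgesIn (graphOf ω) ↑S} ≤
      ∑ k ∈ Finset.range (n + 1),
        (n.choose k : ℝ≥0∞) * ((k * k).choose (m k) : ℝ≥0∞)
          * (min (ENNReal.ofReal p) 1) ^ (m k) := by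
  classical
  have hsub : {ω : Fin n → Fin n → Bool |
        ∃ S : Finset (Fin n), m S.card ≤ edgesIn (graphOf ω) ↑S} ⊆
      ⋃ S ∈ (Finset.univ : Finset (Fin n)).powerset,
        ⋃ T ∈ (esPairs S).powersetCard (m S.card),
          {ω : Fin n → Fin n → Bool | ∀ q ∈ T, ω q.1 q.2 = true} := by
    rintro ω ⟨S, hS⟩
    rw [esEdgesIn_eq] at hS
    obtain ⟨T, hTsub, hTcard⟩ := Finset.exists_subset_card_eq hS
    refine Set.mem_iUnion₂.mpr ⟨S, Finset.mem_powerset.mpr (Finset.subset_univ S),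
      Set.mem_iUnion₂.mpr ⟨T, ?_, ?_⟩⟩
    · exact Finset.mem_powersetCard.mpr ⟨hTsub.trans (Finset.filter_subset _ _), hTcard⟩
    · intro q hq
      exact (Finset.mem_filter.mp (hTsub hq)).2
  refine (measure_mono hsub).trans ?_
  refine (measure_biUnion_finset_le _ _).trans ?_
  refine le_trans (Finset.sum_le_sum fun S _ => measure_biUnion_finset_le _ _) ?_
  have hinner : ∀ S : Finset (Fin n),
      ∑ T ∈ (esPairs S).powersetCard (m S.card),
          gnp n p {ω : Fin n → Fin n → Bool | ∀ q ∈ T, ω q.1 q.2 = true}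
        = ((esPairs S).card.choose (m S.card) : ℝ≥0∞)
            * (min (ENNReal.ofReal p) 1) ^ (m S.card) := by
    intro S
    rw [Finset.sum_congr rfl (fun T hT => by
      rw [esGnp_event, (Finset.mem_powersetCard.mp hT).2])]
    rw [Finset.sum_const, Finset.card_powersetCard, nsmul_eq_mul]
  rw [Finset.sum_congr rfl fun S _ => hinner S]
  rw [Finset.sum_powerset]
  rw [show (Finset.univ : Finset (Fin n)).card = n from Finset.card_fin n]
  refine Finset.sum_le_sum fun j hj => ?_
  have hbound : ∀ S ∈ Finset.powersetCard j (Finset.univ : Finset (Fin n)),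
      ((esPairs S).card.choose (m S.card) : ℝ≥0∞) * (min (ENNReal.ofReal p) 1) ^ (m S.card)
        ≤ ((j * j).choose (m j) : ℝ≥0∞) * (min (ENNReal.ofReal p) 1) ^ (m j) := by
    intro S hS
    have hcard : S.card = j := (Finset.mem_powersetCard.mp hS).2
    have hpc : (esPairs S).card ≤ j * j := by
      calc (esPairs S).card ≤ (S ×ˢ S).card := Finset.card_le_card (Finset.filter_subset _ _)
        _ = j * j := by rw [Finset.card_product, hcard]
    rw [hcard]
    exact mul_le_mul_left (Nat.cast_le.mpr (Nat.choose_le_choose _ hpc)) _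
  calc ∑ S ∈ Finset.powersetCard j (Finset.univ : Finset (Fin n)),
        ((esPairs S).card.choose (m S.card) : ℝ≥0∞) * (min (ENNReal.ofReal p) 1) ^ (m S.card)
      ≤ ∑ _S ∈ Finset.powersetCard j (Finset.univ : Finset (Fin n)),
        ((j * j).choose (m j) : ℝ≥0∞) * (min (ENNReal.ofReal p) 1) ^ (m j) :=
        Finset.sum_le_sum hbound
    _ = (n.choose j : ℝ≥0∞) *
          (((j * j).choose (m j) : ℝ≥0∞) * (min (ENNReal.ofReal p) 1) ^ (m j)) := by
        rw [Finset.sum_const, Finset.card_powersetCard, Finset.card_fin, nsmul_eq_mul]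
    _ = _ := by ring

lemma esUnion_bound_real (n : ℕ) (p : ℝ) (hp : 0 ≤ p) (m : ℕ → ℕ) :
    gnp n p {ω | ∃ S : Finset (Fin n), m S.card ≤ edgesIn (graphOf ω) ↑S} ≤
      ENNReal.ofReal (∑ k ∈ Finset.range (n + 1),
        (n.choose k : ℝ) * ((k * k).choose (m k) : ℝ) * p ^ (m k)) := by
  refine (esUnion_bound n p m).trans ?_
  rw [ENNReal.ofReal_sum_of_nonneg (fun k _ => by positivity)]
  refine Finset.sum_le_sum fun k _ => ?_
  rw [ENNReal.ofReal_mul (by positivity), ENNReal.ofReal_mul (by positivity),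
    ENNReal.ofReal_natCast, ENNReal.ofReal_natCast, ENNReal.ofReal_pow hp]
  exact mul_le_mul_right (pow_le_pow_left' (min_le_left (ENNReal.ofReal p) 1) (m k)) _

lemma esPow_le_exp_factorial (k : ℕ) : (k : ℝ) ^ k ≤ Real.exp 1 ^ k * (k.factorial : ℝ) := by
  induction k with
  | zero => simp
  | succ k ih =>
    rcases Nat.eq_zero_or_pos k with rfl | hk
    · simpa using Real.one_le_exp (by norm_num)
    have hk0 : (0:ℝ) < k := by exact_mod_cast hk
    have h1 : ((k:ℝ) + 1) ≤ (k:ℝ) * Real.exp (1/k) := by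
      have h := Real.add_one_le_exp (1/(k:ℝ))
      have hh := mul_le_mul_of_nonneg_left h hk0.le
      calc (k:ℝ) + 1 = (k:ℝ) * (1/k + 1) := by field_simp; ring
        _ ≤ (k:ℝ) * Real.exp (1/k) := by linarith [hh]
    have h2 : ((k:ℝ)+1)^k ≤ Real.exp 1 * (k:ℝ)^k := by
      calc ((k:ℝ)+1)^k ≤ ((k:ℝ) * Real.exp (1/k))^k := pow_le_pow_left₀ (by positivity) h1 k
        _ = (k:ℝ)^k * Real.exp (1/k)^k := mul_pow _ _ _
        _ = (k:ℝ)^k * Real.exp 1 := by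
            rw [← Real.exp_nat_mul]
            congr 1
            field_simp
        _ = Real.exp 1 * (k:ℝ)^k := mul_comm _ _
    have he : (0:ℝ) < Real.exp 1 := Real.exp_pos 1
    have hkk : (0:ℝ) ≤ ((k:ℝ)+1) := by positivity
    calc ((k+1:ℕ):ℝ)^(k+1) = ((k:ℝ)+1) * ((k:ℝ)+1)^k := by push_cast; ring
      _ ≤ ((k:ℝ)+1) * (Real.exp 1 * (k:ℝ)^k) := mul_le_mul_of_nonneg_left h2 hkk
      _ ≤ ((k:ℝ)+1) * (Real.exp 1 * (Real.exp 1 ^ k * k.factorial)) := by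
          refine mul_le_mul_of_nonneg_left (mul_le_mul_of_nonneg_left ih he.le) hkk
      _ = Real.exp 1 ^ (k+1) * ((k+1).factorial : ℝ) := by
          rw [Nat.factorial_succ]
          push_cast
          ring

lemma esChoose_le_real (a k : ℕ) (hk : 0 < k) :
    (a.choose k : ℝ) ≤ (Real.exp 1 * a / k) ^ k := by
  have h1 : (a.choose k : ℝ) ≤ (a:ℝ)^k / (k.factorial : ℝ) := Nat.choose_le_pow_div k a
  have hk0 : (0:ℝ) < k := by exact_mod_cast hk
  have hkf : (0:ℝ) < (k.factorial : ℝ) := by exact_mod_cast k.factorial_pos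
  refine h1.trans ?_
  rw [div_pow, mul_pow, div_le_div_iff₀ hkf (by positivity)]
  have h2 := mul_le_mul_of_nonneg_left (esPow_le_exp_factorial k)
    (by positivity : (0:ℝ) ≤ (a:ℝ)^k)
  calc (a:ℝ)^k * (k:ℝ)^k ≤ (a:ℝ)^k * (Real.exp 1 ^ k * k.factorial) := h2
    _ = Real.exp 1 ^ k * (a:ℝ)^k * k.factorial := by ring

lemma esPart1_term (n k : ℕ) (p : ℝ) (hk1 : 1 ≤ k) (hkn : k ≤ n) (hp0 : 0 < p)
    (m : ℕ) (hm8k : 8 * k < m) (hmd : 8 * ((n:ℝ) * p) * k < m) :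
    (n.choose k : ℝ) * ((k * k).choose m : ℝ) * p ^ m ≤ (1/2) ^ k / n := by
  have hn1 : 1 ≤ n := hk1.trans hkn
  have hn0 : (0:ℝ) < n := by exact_mod_cast hn1
  have hk0 : (0:ℝ) < k := by exact_mod_cast hk1
  have hmpos : 0 < m := by omega
  have hm0 : (0:ℝ) < m := by exact_mod_cast hmpos
  have he0 : (0:ℝ) < Real.exp 1 := Real.exp_pos 1
  have he3 : Real.exp 1 < 3 := lt_trans Real.exp_one_lt_d9 (by norm_num)
  have hknR : (k:ℝ) ≤ n := by exact_mod_cast hkn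
  have e1 : (n.choose k : ℝ) ≤ (Real.exp 1 * n / k)^k := esChoose_le_real n k hk1
  have e2 : ((k*k).choose m : ℝ) ≤ (Real.exp 1 * (k*k : ℕ) / m)^m := esChoose_le_real _ m hmpos
  set x := Real.exp 1 * (k:ℝ) * k * p / m with hxdef
  have hstep : ((k*k).choose m : ℝ) * p^m ≤ x^m := by
    calc ((k*k).choose m : ℝ) * p^m
        ≤ (Real.exp 1 * (k*k : ℕ) / m)^m * p^m :=
          mul_le_mul_of_nonneg_right e2 (by positivity)
      _ = x^m := by rw [← mul_pow]; congr 1; push_cast; ring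
  have hx0 : 0 ≤ x := by positivity
  have hxle : x ≤ Real.exp 1 * k / (8 * n) := by
    rw [hxdef, div_le_div_iff₀ hm0 (by positivity)]
    nlinarith [hmd, mul_pos he0 hk0, mul_pos hk0 hn0, hp0]
  have hxhalf : Real.exp 1 * k / (8*n) ≤ 1/2 := by
    rw [div_le_div_iff₀ (by positivity) (by norm_num)]
    nlinarith [hk0, hn0, he3, he0, hknR]
  have hx1 : x ≤ 1 := hxle.trans (hxhalf.trans (by norm_num))
  have hpow : x^m ≤ (Real.exp 1 * k/(8*n))^(8*k) :=
    (pow_le_pow_of_le_one hx0 hx1 (le_of_lt hm8k)).trans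
      (pow_le_pow_left₀ hx0 hxle _)
  have main : (n.choose k : ℝ) * (((k*k).choose m : ℝ) * p^m)
      ≤ (Real.exp 1 * n/k)^k * (Real.exp 1 * k/(8*n))^(8*k) :=
    mul_le_mul e1 (hstep.trans hpow) (by positivity) (by positivity)
  have hRHS : (Real.exp 1 * n/k)^k * (Real.exp 1 * k/(8*n))^(8*k)
      = ((Real.exp 1 * n/k) * (Real.exp 1 * k/(8*n))^8)^k := by
    rw [pow_mul, ← mul_pow]
  have hB : (Real.exp 1 * n / k) * (Real.exp 1 * k/(8*n))^8 ≤ (1/4) * ((k:ℝ)/n)^7 := by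
    have h9 : Real.exp 1 ^ 9 ≤ 19683 := by
      calc Real.exp 1 ^ 9 ≤ 3^9 := pow_le_pow_left₀ he0.le he3.le 9
        _ = 19683 := by norm_num
    have heq : (Real.exp 1 * n/k) * (Real.exp 1 * k/(8*n))^8
        = Real.exp 1^9 / 8^8 * ((k:ℝ)/n)^7 := by
      have h19 : Real.exp 9 = Real.exp 1 ^ 9 := by
        rw [← Real.exp_nat_mul]; norm_num
      field_simp
    rw [heq]
    have h7 : (0:ℝ) ≤ ((k:ℝ)/n)^7 := by positivity
    have hc : Real.exp 1^9 / 8^8 ≤ (1/4 : ℝ) := by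
      rw [div_le_iff₀ (by norm_num : (0:ℝ) < 8^8)]
      nlinarith [h9]
    exact mul_le_mul_of_nonneg_right hc h7
  have hkn' : (k:ℝ)/n ≤ 1 := (div_le_one hn0).mpr hknR
  have h2k : (k:ℝ) ≤ 2^k := by exact_mod_cast (Nat.lt_two_pow_self (n := k)).le
  have hfin : ((1/4) * ((k:ℝ)/n)^7)^k ≤ (1/2)^k / n := by
    rw [mul_pow]
    have h7 : (((k:ℝ)/n)^7)^k ≤ (k:ℝ)/n := by
      rw [← pow_mul]
      calc ((k:ℝ)/n)^(7*k) ≤ ((k:ℝ)/n)^1 :=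
          pow_le_pow_of_le_one (by positivity) hkn' (by omega)
        _ = (k:ℝ)/n := pow_one _
    have hfrac : (k:ℝ)/n ≤ (2:ℝ)^k/n := by gcongr
    calc (1/4:ℝ)^k * (((k:ℝ)/n)^7)^k ≤ (1/4:ℝ)^k * ((2:ℝ)^k/n) := by
          refine mul_le_mul_of_nonneg_left (h7.trans hfrac) (by positivity)
      _ = (1/2)^k / n := by
          rw [mul_div_assoc', ← mul_pow]
          norm_num
  calc (n.choose k : ℝ) * ((k * k).choose m : ℝ) * p ^ m
      = (n.choose k : ℝ) * (((k*k).choose m : ℝ) * p^m) := by ring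
    _ ≤ (Real.exp 1 * n/k)^k * (Real.exp 1 * k/(8*n))^(8*k) := main
    _ = ((Real.exp 1 * n/k) * (Real.exp 1 * k/(8*n))^8)^k := hRHS
    _ ≤ ((1/4) * ((k:ℝ)/n)^7)^k := pow_le_pow_left₀ (by positivity) hB k
    _ ≤ (1/2)^k / n := hfin

def esM1 (n : ℕ) (p : ℝ) (k : ℕ) : ℕ := ⌊8 * ((n:ℝ) * p) * k⌋₊ + 1

def esM2 (s : ℕ) (k : ℕ) : ℕ := if k ≤ s then 2*k+1 else k*k+1

lemma esPart1_sum (n : ℕ) (p : ℝ) (hn : 1 ≤ n) (hp : 1/(n:ℝ) < p) :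
    ∑ k ∈ Finset.range (n+1),
      (n.choose k : ℝ) * ((k*k).choose (esM1 n p k) : ℝ) * p ^ (esM1 n p k) ≤ 2/n := by
  have hn0 : (0:ℝ) < n := by exact_mod_cast hn
  have hp0 : 0 < p := lt_trans (by positivity) hp
  have hd : 1 < (n:ℝ) * p := by
    rw [div_lt_iff₀ hn0] at hp
    linarith [hp]
  have hterm : ∀ k ∈ Finset.range (n+1),
      (n.choose k : ℝ) * ((k*k).choose (esM1 n p k) : ℝ) * p ^ (esM1 n p k)
        ≤ (1/2)^k / n := by
    intro k hk
    rcases Nat.eq_zero_or_pos k with rfl | hk1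
    · have hm : esM1 n p 0 = 1 := by simp [esM1]
      rw [hm]
      norm_num
    · have hkn : k ≤ n := by
        have := Finset.mem_range.mp hk; omega
      have hk0 : (0:ℝ) < k := by exact_mod_cast hk1
      have hmd : 8 * ((n:ℝ)*p) * k < esM1 n p k := by
        have h := Nat.lt_floor_add_one (8 * ((n:ℝ)*p) * k)
        rw [esM1]
        push_cast
        linarith
      have hm8k : 8 * k < esM1 n p k := by
        have h8 : ((8*k : ℕ):ℝ) < (esM1 n p k : ℝ) := by
          push_cast
          nlinarith [hmd, hd, hk0]
        exact_mod_cast h8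
      exact esPart1_term n k p hk1 hkn hp0 _ hm8k hmd
  refine (Finset.sum_le_sum hterm).trans ?_
  rw [← Finset.sum_div]
  have hgeom : ∑ k ∈ Finset.range (n+1), (1/2:ℝ)^k ≤ 2 := by
    have h := geom_sum_eq (by norm_num : (1/2:ℝ) ≠ 1) (n+1)
    rw [h]
    have hp2 : (0:ℝ) ≤ (1/2:ℝ)^(n+1) := by positivity
    have hp3 : (1/2:ℝ)^(n+1) ≤ 1 := by
      apply pow_le_one₀ <;> norm_num
    rw [div_le_iff_of_neg (by norm_num : (1/2:ℝ) - 1 < 0)]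
    nlinarith
  gcongr

lemma esPart2_sum (n s : ℕ) (p : ℝ) (hn : 3 ≤ n) (hp0 : 0 < p)
    (hp2 : p < 2 * Real.log n / n) (hs : (s:ℝ) ≤ Real.log n ^ 2)
    (hu : 4 * Real.log n ^ 10 / n ≤ 1) :
    ∑ k ∈ Finset.range (n+1),
      (n.choose k : ℝ) * ((k*k).choose (esM2 s k) : ℝ) * p ^ (esM2 s k)
        ≤ 8 * Real.log n ^ 17 / n^2 := by
  classical
  have hn0 : (0:ℝ) < n := by
    have : (3:ℝ) ≤ n := by exact_mod_cast hn
    linarith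
  have hlog1 : 1 ≤ Real.log n := by
    rw [Real.le_log_iff_exp_le hn0]
    have h3 : (3:ℝ) ≤ n := by exact_mod_cast hn
    have he : Real.exp 1 < 3 := lt_trans Real.exp_one_lt_d9 (by norm_num)
    linarith
  have hlog0 : 0 < Real.log n := by linarith
  set B : ℝ := 8 * Real.log n ^ 15 / n^2 with hB
  have hB0 : 0 ≤ B := by positivity
  have hterm : ∀ k ∈ Finset.range (n+1),
      (n.choose k : ℝ) * ((k*k).choose (esM2 s k) : ℝ) * p ^ (esM2 s k)
        ≤ if 1 ≤ k ∧ k ≤ s then B else 0 := by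
    intro k hk
    rcases Nat.eq_zero_or_pos k with rfl | hk1
    · have hm : esM2 s 0 = 1 := by simp [esM2]
      rw [hm, if_neg (by omega)]
      norm_num
    rcases le_or_gt k s with hks | hks
    swap
    · have hm : esM2 s k = k*k+1 := by rw [esM2, if_neg (by omega)]
      rw [hm, if_neg (by omega), Nat.choose_succ_self]
      norm_num
    rw [if_pos ⟨hk1, hks⟩]
    have hm : esM2 s k = 2*k+1 := by rw [esM2, if_pos hks]
    rw [hm]
    have hkR : (0:ℝ) < k := by exact_mod_cast hk1
    have hksR : (k:ℝ) ≤ s := by exact_mod_cast hks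
    have hklog : (k:ℝ) ≤ Real.log n ^ 2 := hksR.trans hs
    have hc1 : (n.choose k : ℝ) ≤ (n:ℝ)^k := by
      exact_mod_cast Nat.choose_le_pow n k
    have hc2 : ((k*k).choose (2*k+1) : ℝ) ≤ ((k:ℝ)*k)^(2*k+1) := by
      calc ((k*k).choose (2*k+1) : ℝ) ≤ ((k*k : ℕ):ℝ)^(2*k+1) := by
            exact_mod_cast Nat.choose_le_pow (k*k) (2*k+1)
        _ = ((k:ℝ)*k)^(2*k+1) := by push_cast; ring
    have hsplit : (n:ℝ)^k * ((k:ℝ)*k)^(2*k+1) * p^(2*k+1)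
        = ((n:ℝ) * (k:ℝ)^4 * p^2)^k * ((k:ℝ)^2 * p) := by
      have e1 : ((k:ℝ)*k)^(2*k+1) = (k:ℝ)^(4*k+2) := by
        rw [show (k:ℝ)*k = (k:ℝ)^2 by ring, ← pow_mul]
        congr 1
        omega
      have e2 : ((n:ℝ) * (k:ℝ)^4 * p^2)^k = (n:ℝ)^k * ((k:ℝ)^(4*k) * p^(2*k)) := by
        rw [mul_pow, mul_pow, ← pow_mul, ← pow_mul]
        ring_nf
      rw [e1, e2, pow_add, pow_add, pow_one]
      ring
    have hu1 : (n:ℝ) * (k:ℝ)^4 * p^2 ≤ 4 * Real.log n ^ 10 / n := by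
      have hpb : p ≤ 2 * Real.log n / n := hp2.le
      have hp2b : p^2 ≤ (2 * Real.log n / n)^2 := by
        apply pow_le_pow_left₀ hp0.le hpb
      have hk4 : (k:ℝ)^4 ≤ Real.log n ^ 8 := by
        calc (k:ℝ)^4 ≤ (Real.log n ^ 2)^4 := pow_le_pow_left₀ hkR.le hklog 4
          _ = Real.log n ^ 8 := by rw [← pow_mul]
      calc (n:ℝ) * (k:ℝ)^4 * p^2 ≤ (n:ℝ) * Real.log n ^ 8 * (2 * Real.log n / n)^2 := by
            apply mul_le_mul (mul_le_mul_of_nonneg_left hk4 hn0.le) hp2b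
              (by positivity) (by positivity)
        _ = 4 * Real.log n ^ 10 / n := by
            field_simp
            ring
    have hv1 : (k:ℝ)^2 * p ≤ 2 * Real.log n ^ 5 / n := by
      have hk2 : (k:ℝ)^2 ≤ Real.log n ^ 4 := by
        calc (k:ℝ)^2 ≤ (Real.log n ^ 2)^2 := pow_le_pow_left₀ hkR.le hklog 2
          _ = Real.log n ^ 4 := by rw [← pow_mul]
      calc (k:ℝ)^2 * p ≤ Real.log n ^ 4 * (2 * Real.log n / n) := by
            apply mul_le_mul hk2 hp2.le hp0.le (by positivity)
        _ = 2 * Real.log n ^ 5 / n := by field_simp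
    have hu0 : 0 ≤ (n:ℝ) * (k:ℝ)^4 * p^2 := by positivity
    have hule : ((n:ℝ) * (k:ℝ)^4 * p^2)^k ≤ 4 * Real.log n ^ 10 / n := by
      calc ((n:ℝ) * (k:ℝ)^4 * p^2)^k ≤ ((n:ℝ) * (k:ℝ)^4 * p^2)^1 :=
            pow_le_pow_of_le_one hu0 (hu1.trans hu) hk1
        _ = (n:ℝ) * (k:ℝ)^4 * p^2 := pow_one _
        _ ≤ 4 * Real.log n ^ 10 / n := hu1
    calc (n.choose k : ℝ) * ((k*k).choose (2*k+1) : ℝ) * p ^ (2*k+1)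
        ≤ (n:ℝ)^k * ((k:ℝ)*k)^(2*k+1) * p^(2*k+1) := by
          apply mul_le_mul (mul_le_mul hc1 hc2 (by positivity) (by positivity)) le_rfl
            (by positivity) (by positivity)
      _ = ((n:ℝ) * (k:ℝ)^4 * p^2)^k * ((k:ℝ)^2 * p) := hsplit
      _ ≤ (4 * Real.log n ^ 10 / n) * (2 * Real.log n ^ 5 / n) := by
          apply mul_le_mul hule hv1 (by positivity) (by positivity)
      _ = B := by rw [hB]; field_simp; ring
  refine (Finset.sum_le_sum hterm).trans ?_
  have hsum : ∑ k ∈ Finset.range (n+1), (if 1 ≤ k ∧ k ≤ s then B else 0)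
      = ((Finset.range (n+1)).filter (fun k => 1 ≤ k ∧ k ≤ s)).card • B := by
    rw [← Finset.sum_filter, Finset.sum_const]
  rw [hsum]
  have hcard : ((Finset.range (n+1)).filter (fun k => 1 ≤ k ∧ k ≤ s)).card ≤ s := by
    have hsub : ((Finset.range (n+1)).filter (fun k => 1 ≤ k ∧ k ≤ s)) ⊆ Finset.Icc 1 s := by
      intro k hk
      have := Finset.mem_filter.mp hk
      exact Finset.mem_Icc.mpr this.2
    calc _ ≤ (Finset.Icc 1 s).card := Finset.card_le_card hsub
      _ = s := by rw [Nat.card_Icc]; omega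
  calc ((Finset.range (n+1)).filter (fun k => 1 ≤ k ∧ k ≤ s)).card • B
      ≤ (s : ℝ) * B := by
        rw [nsmul_eq_mul]
        apply mul_le_mul_of_nonneg_right ?_ hB0
        exact_mod_cast hcard
    _ ≤ Real.log n ^ 2 * B := mul_le_mul_of_nonneg_right hs hB0
    _ = 8 * Real.log n ^ 17 / n^2 := by rw [hB]; field_simp

instance esGnpProb (n : ℕ) (p : ℝ) : IsProbabilityMeasure (gnp n p) := by
  unfold gnp
  infer_instance

lemma esTendsto_prob_one {Ω : ℕ → Type} [∀ n, MeasurableSpace (Ω n)]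
    (μ : ∀ n, Measure (Ω n)) [∀ n, IsProbabilityMeasure (μ n)]
    (good bad : ∀ n, Set (Ω n)) (hsub : ∀ᶠ n in atTop, (bad n)ᶜ ⊆ good n) (b : ℕ → ℝ)
    (hb : ∀ᶠ n in atTop, μ n (bad n) ≤ ENNReal.ofReal (b n))
    (hb0 : Tendsto b atTop (nhds 0)) :
    Tendsto (fun n => μ n (good n)) atTop (nhds 1) := by
  have hbad : Tendsto (fun n => μ n (bad n)) atTop (nhds 0) := by
    have h1 : Tendsto (fun n => ENNReal.ofReal (b n)) atTop (nhds 0) := by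
      simpa using ENNReal.tendsto_ofReal hb0
    exact tendsto_of_tendsto_of_tendsto_of_le_of_le' tendsto_const_nhds h1
      (Eventually.of_forall fun n => zero_le) hb
  have hlow : Tendsto (fun n => 1 - μ n (bad n)) atTop (nhds 1) := by
    have h := ENNReal.Tendsto.sub (tendsto_const_nhds (x := (1:ℝ≥0∞))) hbad
      (Or.inl ENNReal.one_ne_top)
    simpa using h
  refine tendsto_of_tendsto_of_tendsto_of_le_of_le' hlow tendsto_const_nhds
    (hsub.mono fun n hn => ?_) (Eventually.of_forall fun n => prob_le_one)
  have h1 : (1:ℝ≥0∞) ≤ μ n (bad n) + μ n (good n) := by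
    calc (1:ℝ≥0∞) = μ n Set.univ := (measure_univ).symm
      _ ≤ μ n (bad n ∪ good n) := measure_mono (fun x _ => by
          by_cases hx : x ∈ bad n
          · exact Or.inl hx
          · exact Or.inr (hn hx))
      _ ≤ μ n (bad n) + μ n (good n) := measure_union_le _ _
  exact tsub_le_iff_left.mpr h1

end AuxEdgesInConnectedSets

/-- There is an absolute constant `l` such that for `1/n < p < 2 ln n/n`,
a.a.s. every connected set `S` satisfies `e(S) ≤ l d |S|`; moreover for any `s(n) = o(ln² n)`,
a.a.s. every connected set `S` with `|S| ≤ s(n)` satisfies `e(S) ≤ 2|S|`. -/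
theorem edges_in_connected_sets :
    (∃ l : ℝ, 0 < l ∧ ∀ p : ℕ → ℝ,
      (∀ᶠ n : ℕ in atTop, 1 / (n : ℝ) < p n ∧ p n < 2 * Real.log n / n) →
      Tendsto (fun n : ℕ =>
        gnp n (p n) {ω | ∀ S : Finset (Fin n), connSet (graphOf ω) (S : Set (Fin n)) →
          (edgesIn (graphOf ω) (S : Set (Fin n)) : ℝ) ≤ l * ((n : ℝ) * p n) * S.card})
        atTop (nhds 1)) ∧
    (∀ s : ℕ → ℕ, (fun n : ℕ => (s n : ℝ)) =o[atTop] (fun n : ℕ => (Real.log n) ^ 2) →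
      ∀ p : ℕ → ℝ,
      (∀ᶠ n : ℕ in atTop, 1 / (n : ℝ) < p n ∧ p n < 2 * Real.log n / n) →
      Tendsto (fun n : ℕ =>
        gnp n (p n) {ω | ∀ S : Finset (Fin n), connSet (graphOf ω) (S : Set (Fin n)) →
          S.card ≤ s n → edgesIn (graphOf ω) (S : Set (Fin n)) ≤ 2 * S.card})
        atTop (nhds 1)) := by
  constructor
  · refine ⟨8, by norm_num, ?_⟩
    intro p hp
    have hev : ∀ᶠ n : ℕ in atTop,
        (1:ℕ) ≤ n ∧ (1/(n:ℝ) < p n ∧ p n < 2 * Real.log n / n) :=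
      (eventually_ge_atTop 1).and hp
    refine esTendsto_prob_one (fun n => gnp n (p n))
      (fun n => {ω | ∀ S : Finset (Fin n), connSet (graphOf ω) (S : Set (Fin n)) →
        (edgesIn (graphOf ω) (S : Set (Fin n)) : ℝ) ≤ 8 * ((n : ℝ) * p n) * S.card})
      (fun n => {ω | ∃ S : Finset (Fin n),
        esM1 n (p n) S.card ≤ edgesIn (graphOf ω) ↑S})
      ?_ (fun n => 2/(n:ℝ)) ?_ (tendsto_const_div_atTop_nhds_zero_nat 2)
    · refine hev.mono fun n hn => ?_
      obtain ⟨hn1, hp1, _⟩ := hn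
      have hn0 : (0:ℝ) < n := by exact_mod_cast hn1
      have hp0 : 0 < p n := lt_trans (one_div_pos.mpr hn0) hp1
      intro ω hω S _
      have h1 : ¬ (esM1 n (p n) S.card ≤ edgesIn (graphOf ω) ↑S) := fun hcon => hω ⟨S, hcon⟩
      simp only [esM1] at h1
      have h2 : edgesIn (graphOf ω) ↑S ≤ ⌊8 * ((n:ℝ) * p n) * S.card⌋₊ := by omega
      have h3 : (edgesIn (graphOf ω) ↑S : ℝ) ≤ (⌊8 * ((n:ℝ) * p n) * S.card⌋₊ : ℝ) := by
        exact_mod_cast h2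
      exact h3.trans (Nat.floor_le (by positivity))
    · refine hev.mono fun n hn => ?_
      obtain ⟨hn1, hp1, _⟩ := hn
      have hn0 : (0:ℝ) < n := by exact_mod_cast hn1
      have hp0 : 0 < p n := lt_trans (one_div_pos.mpr hn0) hp1
      refine (esUnion_bound_real n (p n) hp0.le (esM1 n (p n))).trans ?_
      exact ENNReal.ofReal_le_ofReal (esPart1_sum n (p n) hn1 hp1)
  · intro s hs p hp
    have hslog : ∀ᶠ n : ℕ in atTop, (s n : ℝ) ≤ Real.log n ^ 2 := by
      filter_upwards [hs.bound one_pos] with n hn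
      rw [Real.norm_eq_abs, Real.norm_eq_abs, one_mul] at hn
      calc (s n : ℝ) ≤ |(s n : ℝ)| := le_abs_self _
        _ ≤ |Real.log n ^ 2| := hn
        _ = Real.log n ^ 2 := abs_of_nonneg (by positivity)
    have hbase : ∀ m : ℕ, Tendsto (fun n : ℕ => Real.log n ^ m / n) atTop (nhds 0) := by
      intro m
      have h := (Real.tendsto_pow_log_div_mul_add_atTop 1 0 m one_ne_zero).comp
        tendsto_natCast_atTop_atTop
      simpa [Function.comp_def] using h
    have hu : ∀ᶠ n : ℕ in atTop, 4 * Real.log n ^ 10 / n ≤ 1 := by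
      have h4 : Tendsto (fun n : ℕ => 4 * (Real.log n ^ 10 / n)) atTop (nhds 0) := by
        simpa using (hbase 10).const_mul (4:ℝ)
      filter_upwards [h4.eventually (eventually_le_nhds (by norm_num : (0:ℝ) < 1))] with n hn
      calc 4 * Real.log n ^ 10 / n = 4 * (Real.log n ^ 10 / n) := by ring
        _ ≤ 1 := hn
    have hb0 : Tendsto (fun n : ℕ => 8 * (Real.log n ^ 17 / n)) atTop (nhds 0) := by
      simpa using (hbase 17).const_mul (8:ℝ)
    refine esTendsto_prob_one (fun n => gnp n (p n))
      (fun n => {ω | ∀ S : Finset (Fin n), connSet (graphOf ω) (S : Set (Fin n)) →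
        S.card ≤ s n → edgesIn (graphOf ω) (S : Set (Fin n)) ≤ 2 * S.card})
      (fun n => {ω | ∃ S : Finset (Fin n),
        esM2 (s n) S.card ≤ edgesIn (graphOf ω) ↑S})
      ?_ (fun n => 8 * (Real.log n ^ 17 / n)) ?_ hb0
    · refine Eventually.of_forall fun n => ?_
      intro ω hω S _ hcard
      have h1 : ¬ (esM2 (s n) S.card ≤ edgesIn (graphOf ω) ↑S) := fun hcon => hω ⟨S, hcon⟩
      have hm : esM2 (s n) S.card = 2 * S.card + 1 := by rw [esM2, if_pos hcard]
      rw [hm] at h1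
      omega
    · filter_upwards [hp, hslog, hu, eventually_ge_atTop 3] with n hp' hsl hu' hn3
      have hn0 : (0:ℝ) < n := by
        have : (3:ℝ) ≤ n := by exact_mod_cast hn3
        linarith
      have hp0 : 0 < p n := lt_trans (one_div_pos.mpr hn0) hp'.1
      refine (esUnion_bound_real n (p n) hp0.le (esM2 (s n))).trans
        (ENNReal.ofReal_le_ofReal ?_)
      refine (esPart2_sum n (s n) (p n) hn3 hp0 hp'.2 hsl hu').trans ?_
      have hlog0 : 0 ≤ Real.log n := Real.log_nonneg (by exact_mod_cast Nat.one_le_of_lt hn3)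
      have h1n : (1:ℝ) ≤ n := by exact_mod_cast Nat.one_le_of_lt hn3
      have hnn : (n:ℝ) ≤ (n:ℝ)^2 := by nlinarith
      calc 8 * Real.log n ^ 17 / (n:ℝ)^2 ≤ 8 * Real.log n ^ 17 / n := by
            apply div_le_div_of_nonneg_left (by positivity) hn0 hnn
        _ = 8 * (Real.log n ^ 17 / n) := by ring

end
end

section
/- For every fixed constant d > 1 there exists L > 0 such that, with p = d/n, a.a.s. every connected set S ⊆ {1,…,n} of G_{n,p} with ln n ≤ |S| ≤ n satisfies d(S) ≤ L·|S|. -/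
open MeasureTheory Finset Filter

noncomputable section

attribute [local instance] Classical.propDecidable

/-! If a connected set `S` with `|S| = k` has `d(S) > 2(L+1)k`, then more than `(L+1)k` edges meet
`S`; besides the `k - 1` edges of a spanning tree of `S` there are at least `Lk` further ones. A
union bound over `S`, the tree, and `Lk` further pairs meeting `S` bounds the probability of this by
`C(n,k) C(k², k-1) C(kn, Lk) (d/n)^(k-1+Lk) ≤ n (e² d (e d / L)^L)^k`. For `L` of order `d²` the
base is at most `e⁻³`, so for `k ≥ ln n` each term is at most `n⁻²`, and the sum over `k ≤ n` is at
most `1/n`. -/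

lemma measure_biUnion_le_mul {Ω ι : Type*} [MeasurableSpace Ω] (μ : Measure Ω) {s : Finset ι}
    {A : ι → Set Ω} {m : ℕ} {c : ENNReal} (hs : #s ≤ m) (h : ∀ i ∈ s, μ (A i) ≤ c) :
    μ (⋃ i ∈ s, A i) ≤ m * c :=
  calc μ (⋃ i ∈ s, A i) ≤ ∑ i ∈ s, μ (A i) := measure_biUnion_finset_le s A
    _ ≤ #s * c := (sum_le_card_nsmul s _ c h).trans_eq (nsmul_eq_mul _ _)
    _ ≤ m * c := by gcongr

lemma card_sym2_le_mul_self {α : Type*} [DecidableEq α] (s : Finset α) :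
    #s.sym2 ≤ #s * #s := by
  rw [card_sym2, Nat.choose_two_right]
  refine Nat.div_le_of_le_mul ?_
  rw [Nat.add_sub_cancel]
  nlinarith

lemma tendsto_measure_one_of_compl_subset {Ω : ℕ → Type*} [∀ n, MeasurableSpace (Ω n)]
    (μ : ∀ n, Measure (Ω n)) [∀ n, IsProbabilityMeasure (μ n)] {A B : ∀ n, Set (Ω n)}
    (hAB : ∀ n, (A n)ᶜ ⊆ B n) (hB : Tendsto (fun n => μ n (B n)) atTop (nhds 0)) :
    Tendsto (fun n => μ n (A n)) atTop (nhds 1) := by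
  have hlow : ∀ n, 1 - μ n (B n) ≤ μ n (A n) := fun n => by
    rw [tsub_le_iff_right]
    calc 1 = μ n Set.univ := measure_univ.symm
      _ ≤ μ n (A n ∪ B n) := measure_mono fun x _ => by
          by_cases hx : x ∈ A n
          exacts [Or.inl hx, Or.inr (hAB n hx)]
      _ ≤ μ n (A n) + μ n (B n) := measure_union_le _ _
  have hsub := ENNReal.Tendsto.sub tendsto_const_nhds hB (Or.inl ENNReal.one_ne_top)
  rw [tsub_zero] at hsub
  exact tendsto_of_tendsto_of_tendsto_of_le_of_le hsub tendsto_const_nhds hlow fun n => prob_le_one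

namespace SimpleGraph

variable {V : Type*} (G : SimpleGraph V)

lemma ncard_neighborSet_eq_degree [Fintype V] [DecidableRel G.Adj] (v : V) :
    (G.neighborSet v).ncard = G.degree v := by
  rw [Set.ncard_eq_toFinset_card', ← card_neighborFinset_eq_degree]
  rfl

lemma degSum_le_two_mul_card_incident [Fintype V] [DecidableEq V] [DecidableRel G.Adj]
    (S : Finset V) : degSum G S ≤ 2 * #{e ∈ G.edgeFinset | ∃ v ∈ S, v ∈ e} := by
  set I := {e ∈ G.edgeFinset | ∃ v ∈ S, v ∈ e}
  have hdeg : ∀ v ∈ S, (G.neighborSet v).ncard = #(I.bipartiteAbove (· ∈ ·) v) := by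
    intro v hv
    rw [ncard_neighborSet_eq_degree, ← card_incidenceFinset_eq_degree, incidenceFinset_eq_filter]
    congr 1
    ext e
    simp only [mem_bipartiteAbove, mem_filter, I]
    exact ⟨fun h => ⟨⟨h.1, v, hv, h.2⟩, h.2⟩, fun h => ⟨h.1.1, h.2⟩⟩
  have hpair : ∀ e ∈ I, #(S.bipartiteBelow (· ∈ ·) e) ≤ 2 := fun e _ =>
    (card_le_card fun v hv => Sym2.mem_toFinset.2 ((mem_bipartiteBelow _).1 hv).2).trans
      (by rw [Sym2.card_toFinset]; split_ifs <;> omega)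
  calc degSum G S = ∑ v ∈ S, #(I.bipartiteAbove (· ∈ ·) v) := sum_congr rfl hdeg
    _ = ∑ e ∈ I, #(S.bipartiteBelow (· ∈ ·) e) :=
      sum_card_bipartiteAbove_eq_sum_card_bipartiteBelow _
    _ ≤ #I * 2 := sum_le_card_nsmul _ _ _ hpair
    _ = 2 * #I := mul_comm _ _

lemma exists_spanning_edges [DecidableEq V] {S : Finset V} (hS : connSet G S) :
    ∃ T ⊆ S.sym2, (∀ e ∈ T, e ∈ G.edgeSet) ∧ #T = #S - 1 := by
  obtain ⟨T, hTG, hT⟩ := hS.exists_isTree_le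
  refine ⟨T.edgeFinset.map ⟨Sym2.map Subtype.val, Sym2.map.injective Subtype.val_injective⟩,
    ?_, ?_, ?_⟩
  · intro e he
    obtain ⟨e, -, rfl⟩ := mem_map.1 he
    induction e using Sym2.ind with
    | _ a b => simp
  · intro e he
    obtain ⟨e, heT, rfl⟩ := mem_map.1 he
    rw [mem_edgeFinset] at heT
    induction e using Sym2.ind with
    | _ a b => exact hTG heT
  · have := hT.card_edgeFinset
    simp only [Finset.coe_sort_coe, Fintype.card_coe] at this
    rw [card_map]
    omega

lemma exists_spanning_and_extra_edges [Fintype V] [DecidableEq V] [DecidableRel G.Adj]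
    {S : Finset V} {L : ℕ} (hS : connSet G S) (hdeg : 2 * (L + 1) * #S < degSum G S) :
    ∃ T ∈ powersetCard (#S - 1) S.sym2,
      ∃ E ∈ powersetCard (L * #S) ((S ×ˢ univ).image (fun x => s(x.1, x.2)) \ T),
        ∀ e ∈ T ∪ E, e ∈ G.edgeSet := by
  obtain ⟨T, hTS, hTG, hTcard⟩ := G.exists_spanning_edges hS
  set I := {e ∈ G.edgeFinset | ∃ v ∈ S, v ∈ e}
  have hTI : T ⊆ I := fun e he => mem_filter.2 ⟨mem_edgeFinset.2 (hTG e he),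
    e.out.1, mem_sym2_iff.1 (hTS he) _ (Sym2.out_fst_mem e), Sym2.out_fst_mem e⟩
  have hIS : I ⊆ (S ×ˢ univ).image (fun x => s(x.1, x.2)) := by
    intro e he
    obtain ⟨v, hvS, hve⟩ := (mem_filter.1 he).2
    exact mem_image.2 ⟨(v, Sym2.Mem.other hve), by simpa using hvS, Sym2.other_spec hve⟩
  have hI : (L + 1) * #S < #I := by
    have : degSum G S ≤ 2 * #I := G.degSum_le_two_mul_card_incident S
    rw [mul_assoc] at hdeg
    omega
  have hextra : L * #S ≤ #(I \ T) := by
    rw [card_sdiff_of_subset hTI, hTcard]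
    rw [add_mul, one_mul] at hI
    omega
  obtain ⟨E, hEI, hEcard⟩ := exists_subset_card_eq hextra
  refine ⟨T, mem_powersetCard.2 ⟨hTS, hTcard⟩, E,
    mem_powersetCard.2 ⟨hEI.trans (sdiff_subset_sdiff hIS le_rfl), hEcard⟩, ?_⟩
  intro e he
  rcases mem_union.1 he with he | he
  · exact hTG e he
  · exact mem_edgeFinset.1 (mem_filter.1 (sdiff_subset (hEI he))).1

end SimpleGraph

instance (n : ℕ) (p : ℝ) : IsProbabilityMeasure (gnp n p) := by
  unfold gnp
  infer_instance

lemma bernoulliMeasure_true_le (p : ℝ) : bernoulliMeasure p {true} ≤ ENNReal.ofReal p := by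
  rw [bernoulliMeasure, PMF.toMeasure_apply_singleton _ _ (measurableSet_singleton _)]
  exact ENNReal.coe_le_coe.2 (min_le_left _ _)

lemma gnp_forall_true_le (n : ℕ) (p : ℝ) (C : Finset (Fin n × Fin n)) :
    gnp n p {ω | ∀ c ∈ C, ω c.1 c.2 = true} ≤ ENNReal.ofReal p ^ #C := by
  have hcyl : {ω : Fin n → Fin n → Bool | ∀ c ∈ C, ω c.1 c.2 = true} =
      Set.univ.pi fun i => Set.univ.pi fun j => if (i, j) ∈ C then {true} else Set.univ := by
    ext ω
    simp only [Set.mem_ofPred_eq, Set.mem_univ_pi]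
    refine ⟨fun h i j => ?_, fun h c hc => by simpa [hc] using h c.1 c.2⟩
    split_ifs with hij
    exacts [h _ hij, trivial]
  rw [hcyl, gnp, Measure.pi_pi]
  simp_rw [Measure.pi_pi, apply_ite (bernoulliMeasure p), measure_univ]
  rw [← Fintype.prod_prod_type'
      (f := fun i j => if (i, j) ∈ C then bernoulliMeasure p {true} else 1),
    prod_ite_mem, univ_inter, prod_const]
  exact pow_le_pow_left' (bernoulliMeasure_true_le p) _

lemma mem_edgeSet_graphOf {n : ℕ} (ω : Fin n → Fin n → Bool) (e : Sym2 (Fin n)) :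
    e ∈ (graphOf ω).edgeSet ↔ ¬ e.IsDiag ∧ ω e.inf e.sup = true := by
  induction e using Sym2.ind with
  | _ a b => simp [graphOf]

lemma gnp_forall_mem_edgeSet_le (n : ℕ) (p : ℝ) (F : Finset (Sym2 (Fin n))) :
    gnp n p {ω | ∀ e ∈ F, e ∈ (graphOf ω).edgeSet} ≤ ENNReal.ofReal p ^ #F := by
  have hinj : Function.Injective fun e : Sym2 (Fin n) => (e.inf, e.sup) := fun e e' h =>
    Sym2.inf_eq_inf_and_sup_eq_sup.1 (Prod.ext_iff.1 h)
  calc gnp n p {ω | ∀ e ∈ F, e ∈ (graphOf ω).edgeSet}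
      ≤ gnp n p {ω | ∀ c ∈ F.image fun e => (e.inf, e.sup), ω c.1 c.2 = true} := by
        refine measure_mono fun ω hω => ?_
        simp only [Set.mem_ofPred_eq, forall_mem_image] at hω ⊢
        exact fun e he => ((mem_edgeSet_graphOf ω e).1 (hω e he)).2
    _ ≤ ENNReal.ofReal p ^ #F := by
        rw [← card_image_of_injective F hinj]
        exact gnp_forall_true_le n p _

def heavyConnSetEvent (n L k : ℕ) : Set (Fin n → Fin n → Bool) :=
  {ω | ∃ S : Finset (Fin n), #S = k ∧ connSet (graphOf ω) S ∧
    2 * (L + 1) * k < degSum (graphOf ω) S}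

lemma heavyConnSetEvent_subset (n L k : ℕ) :
    heavyConnSetEvent n L k ⊆
      ⋃ S ∈ powersetCard k univ, ⋃ T ∈ powersetCard (k - 1) S.sym2,
        ⋃ E ∈ powersetCard (L * k) ((S ×ˢ univ).image (fun x => s(x.1, x.2)) \ T),
          {ω | ∀ e ∈ T ∪ E, e ∈ (graphOf ω).edgeSet} := by
  rintro ω ⟨S, rfl, hS, hdeg⟩
  obtain ⟨T, hT, E, hE, hTE⟩ := (graphOf ω).exists_spanning_and_extra_edges hS hdeg
  simp only [Set.mem_iUnion]
  exact ⟨S, mem_powersetCard.2 ⟨subset_univ _, rfl⟩, T, hT, E, hE, hTE⟩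

lemma gnp_heavyConnSetEvent_le (n L k : ℕ) (p : ℝ) :
    gnp n p (heavyConnSetEvent n L k) ≤
      n.choose k * ((k * k).choose (k - 1) *
        ((k * n).choose (L * k) * ENNReal.ofReal p ^ (k - 1 + L * k))) := by
  refine (measure_mono (heavyConnSetEvent_subset n L k)).trans ?_
  refine measure_biUnion_le_mul _ (by simp) fun S hS => ?_
  have hSk := (mem_powersetCard.1 hS).2
  refine measure_biUnion_le_mul _ ?_ fun T hT => ?_
  · rw [card_powersetCard, ← hSk]
    exact Nat.choose_le_choose _ (card_sym2_le_mul_self S)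
  refine measure_biUnion_le_mul _ ?_ fun E hE => ?_
  · rw [card_powersetCard]
    refine Nat.choose_le_choose _ ((card_le_card sdiff_subset).trans (card_image_le.trans ?_))
    simp [hSk]
  obtain ⟨hES, hEcard⟩ := mem_powersetCard.1 hE
  have hTE : Disjoint T E := disjoint_left.2 fun e heT heE => (mem_sdiff.1 (hES heE)).2 heT
  refine (gnp_forall_mem_edgeSet_le n p _).trans_eq ?_
  rw [card_union_of_disjoint hTE, (mem_powersetCard.1 hT).2, hEcard]

open Real

def heavyRate (d : ℝ) (L : ℕ) : ℝ := exp 2 * d * (exp 1 * d / L) ^ L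

lemma choose_mul_pow_le (m j : ℕ) {x : ℝ} (hx : 0 ≤ x) :
    (m.choose j : ℝ) * x ^ j ≤ (exp 1 * m * x / j) ^ j := by
  rcases Nat.eq_zero_or_pos j with rfl | hj
  · simp
  have hfact : (j : ℝ) ^ j / j.factorial ≤ exp 1 ^ j := by
    rw [← exp_nat_mul, mul_one]
    exact pow_div_factorial_le_exp _ (Nat.cast_nonneg j) j
  have hj0 : (0 : ℝ) < j ^ j := by positivity
  calc (m.choose j : ℝ) * x ^ j ≤ m ^ j / j.factorial * x ^ j := by
        gcongr
        exact Nat.choose_le_pow_div j m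
    _ = (m * x) ^ j / j ^ j * ((j : ℝ) ^ j / j.factorial) := by
        field_simp
        ring
    _ ≤ (m * x) ^ j / j ^ j * exp 1 ^ j := by gcongr
    _ = (exp 1 * m * x / j) ^ j := by
        rw [div_pow, mul_assoc, mul_pow]
        ring

lemma choose_mul_choose_mul_pow_le {n k : ℕ} (hk : 1 ≤ k) {d : ℝ} (hd : 1 ≤ d) :
    (n.choose k : ℝ) * (k * k).choose (k - 1) * (d / n) ^ (k - 1) ≤ n * (exp 2 * d) ^ k := by
  obtain ⟨m, rfl⟩ : ∃ m, k = m + 1 := ⟨k - 1, by omega⟩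
  rcases Nat.eq_zero_or_pos n with rfl | hn
  · simp
  have hexp : ∀ j : ℕ, ((m : ℝ) + 1) ^ j / j.factorial ≤ exp (m + 1) := fun j =>
    pow_div_factorial_le_exp _ (by positivity) j
  rw [Nat.add_sub_cancel]
  calc (n.choose (m + 1) : ℝ) * ((m + 1) * (m + 1) : ℕ).choose m * (d / n) ^ m
      ≤ n ^ (m + 1) / (m + 1).factorial * (((m + 1) * (m + 1)) ^ m / m.factorial) *
          (d / n) ^ m := by
        gcongr
        · exact Nat.choose_le_pow_div _ _
        · exact_mod_cast Nat.choose_le_pow_div (α := ℝ) m ((m + 1) * (m + 1))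
    _ = n * d ^ m * (((m : ℝ) + 1) ^ (m + 1) / (m + 1).factorial *
          ((m + 1) ^ m / m.factorial)) / (m + 1) := by
        rw [div_pow, mul_pow ((m : ℝ) + 1)]
        field_simp
        ring
    _ ≤ n * d ^ m * (exp (m + 1) * exp (m + 1)) := by
        refine (div_le_self (by positivity) (by simp)).trans ?_
        gcongr <;> exact hexp _
    _ = n * d ^ m * exp 2 ^ (m + 1) := by
        rw [← exp_add, ← exp_nat_mul]
        congr 2
        push_cast
        ring
    _ ≤ n * d ^ (m + 1) * exp 2 ^ (m + 1) := by
        gcongr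
        exact m.le_succ
    _ = n * (exp 2 * d) ^ (m + 1) := by ring

lemma choose_mul_choose_mul_choose_mul_pow_le {n k : ℕ} (L : ℕ) (hk : 1 ≤ k) (hkn : k ≤ n)
    {d : ℝ} (hd : 1 ≤ d) :
    (n.choose k : ℝ) * ((k * k).choose (k - 1) * ((k * n).choose (L * k) *
      (d / n) ^ (k - 1 + L * k))) ≤ n * heavyRate d L ^ k := by
  have hn : (n : ℝ) ≠ 0 := Nat.cast_ne_zero.2 (by omega)
  have hk0 : (k : ℝ) ≠ 0 := Nat.cast_ne_zero.2 (by omega)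
  have hratio : exp 1 * ((k * n : ℕ) : ℝ) * (d / n) / (L * k : ℕ) = exp 1 * d / L := by
    push_cast
    rw [show exp 1 * (k * n) * (d / n) = exp 1 * d * k by field_simp,
      mul_div_mul_right _ _ hk0]
  have hextra := choose_mul_pow_le (k * n) (L * k) (show 0 ≤ d / n by positivity)
  rw [hratio] at hextra
  calc (n.choose k : ℝ) * ((k * k).choose (k - 1) * ((k * n).choose (L * k) *
        (d / n) ^ (k - 1 + L * k)))
      = (n.choose k : ℝ) * (k * k).choose (k - 1) * (d / n) ^ (k - 1) *
          ((k * n).choose (L * k) * (d / n) ^ (L * k)) := by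
        rw [pow_add]
        ring
    _ ≤ n * (exp 2 * d) ^ k * (exp 1 * d / L) ^ (L * k) :=
        mul_le_mul (choose_mul_choose_mul_pow_le hk hd) hextra (by positivity) (by positivity)
    _ = n * heavyRate d L ^ k := by
        rw [heavyRate, mul_pow, pow_mul]
        ring

lemma exists_heavyRate_le {d : ℝ} (hd : 1 ≤ d) : ∃ L : ℕ, heavyRate d L ≤ exp (-3) := by
  refine ⟨⌈exp 6 * d ^ 2⌉₊, ?_⟩
  set L := ⌈exp 6 * d ^ 2⌉₊
  have hL : exp 6 * d ^ 2 ≤ L := Nat.le_ceil _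
  have hL0 : L ≠ 0 := (Nat.ceil_pos.2 (by positivity)).ne'
  have hratio : exp 1 * d / L ≤ exp (-5) / d := by
    rw [div_le_div_iff₀ (by positivity) (by positivity)]
    calc exp 1 * d * d = exp (-5) * (exp 6 * d ^ 2) := by
          rw [mul_left_comm, ← mul_assoc, ← exp_add]
          norm_num
          ring
      _ ≤ exp (-5) * L := by gcongr
  have hle1 : exp 1 * d / L ≤ 1 :=
    hratio.trans ((div_le_self (by positivity) hd).trans (exp_le_one_iff.2 (by norm_num)))
  calc heavyRate d L ≤ exp 2 * d * (exp (-5) / d) := by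
        unfold heavyRate
        gcongr
        exact (pow_le_of_le_one (by positivity) hle1 hL0).trans hratio
    _ = exp (-3) := by
        field_simp
        rw [← exp_add]
        norm_num

lemma gnp_heavyConnSetEvent_le_exp {n L k : ℕ} {d : ℝ} (hd : 1 ≤ d)
    (hL : heavyRate d L ≤ exp (-3)) (hk : 1 ≤ k) (hkn : k ≤ n) :
    gnp n (d / n) (heavyConnSetEvent n L k) ≤ ENNReal.ofReal (n * exp (-3) ^ k) := by
  refine (gnp_heavyConnSetEvent_le n L k _).trans ?_
  have hp : 0 ≤ d / n := by positivity
  have hreal : (n.choose k : ENNReal) * ((k * k).choose (k - 1) * ((k * n).choose (L * k) *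
      ENNReal.ofReal (d / n) ^ (k - 1 + L * k))) = ENNReal.ofReal ((n.choose k : ℝ) *
        ((k * k).choose (k - 1) * ((k * n).choose (L * k) * (d / n) ^ (k - 1 + L * k)))) := by
    rw [ENNReal.ofReal_mul (by positivity), ENNReal.ofReal_mul (by positivity),
      ENNReal.ofReal_mul (by positivity), ENNReal.ofReal_pow hp]
    simp only [ENNReal.ofReal_natCast]
  rw [hreal]
  refine ENNReal.ofReal_le_ofReal ((choose_mul_choose_mul_choose_mul_pow_le L hk hkn hd).trans ?_)
  have : 0 ≤ heavyRate d L := by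
    unfold heavyRate
    positivity
  gcongr

lemma gnp_biUnion_heavyConnSetEvent_le {n L : ℕ} {d : ℝ} (hd : 1 ≤ d)
    (hL : heavyRate d L ≤ exp (-3)) :
    gnp n (d / n) (⋃ k ∈ (Icc 1 n).filter (fun k : ℕ => log n ≤ k), heavyConnSetEvent n L k) ≤
      ENNReal.ofReal (n : ℝ)⁻¹ := by
  rcases Nat.eq_zero_or_pos n with rfl | hn
  · simp
  have hn' : (0 : ℝ) < n := Nat.cast_pos.2 hn
  have hterm : ∀ k ∈ (Icc 1 n).filter (fun k : ℕ => log n ≤ k),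
      gnp n (d / n) (heavyConnSetEvent n L k) ≤ ENNReal.ofReal ((n : ℝ) ^ 2)⁻¹ := by
    intro k hk
    obtain ⟨⟨hk1, hkn⟩, hlog⟩ : (1 ≤ k ∧ k ≤ n) ∧ log n ≤ k := by simpa using hk
    refine (gnp_heavyConnSetEvent_le_exp hd hL hk1 hkn).trans (ENNReal.ofReal_le_ofReal ?_)
    have hnk : (n : ℝ) ≤ exp k := by
      rw [← exp_log hn']
      exact exp_le_exp.2 hlog
    calc n * exp (-3) ^ k = n / exp k ^ 3 := by
          rw [← exp_nat_mul, ← exp_nat_mul, div_eq_mul_inv, ← exp_neg]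
          ring_nf
      _ ≤ n / n ^ 3 := by gcongr
      _ = ((n : ℝ) ^ 2)⁻¹ := by field_simp
  have hcard : #((Icc 1 n).filter (fun k : ℕ => log n ≤ k)) ≤ n :=
    (card_filter_le _ _).trans (by simp)
  refine (measure_biUnion_le_mul _ hcard hterm).trans_eq ?_
  rw [← ENNReal.ofReal_natCast, ← ENNReal.ofReal_mul hn'.le]
  congr 1
  field_simp

lemma mem_biUnion_heavyConnSetEvent {n L : ℕ} {ω : Fin n → Fin n → Bool} {S : Finset (Fin n)}
    (hS : connSet (graphOf ω) S) (hlog : log n ≤ #S)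
    (hdeg : 2 * (L + 1) * #S < degSum (graphOf ω) S) :
    ω ∈ ⋃ k ∈ (Icc 1 n).filter (fun k : ℕ => log n ≤ k), heavyConnSetEvent n L k := by
  obtain ⟨⟨v, hv⟩⟩ := hS.nonempty
  simp only [Set.mem_iUnion, mem_filter, mem_Icc, exists_prop]
  exact ⟨#S, ⟨⟨card_pos.2 ⟨v, hv⟩, (card_le_univ S).trans_eq (Fintype.card_fin n)⟩, hlog⟩,
    S, rfl, hS, hdeg⟩

/-- For every fixed `d > 1` there is `L > 0` such that with `p = d/n`,
a.a.s. every connected set `S` with `ln n ≤ |S| ≤ n` satisfies `d(S) ≤ L |S|`. -/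
theorem total_degree_connected_sets (d : ℝ) (hd : 1 < d) :
    ∃ L : ℝ, 0 < L ∧
      Tendsto (fun n : ℕ =>
        gnp n (d / n) {ω | ∀ S : Finset (Fin n), connSet (graphOf ω) (S : Set (Fin n)) →
          Real.log n ≤ (S.card : ℝ) → (S.card : ℝ) ≤ n →
          (degSum (graphOf ω) S : ℝ) ≤ L * S.card})
        atTop (nhds 1) := by
  obtain ⟨L, hL⟩ := exists_heavyRate_le hd.le
  refine ⟨2 * (L + 1), by positivity, tendsto_measure_one_of_compl_subset _ (B := fun n =>
    ⋃ k ∈ (Icc 1 n).filter (fun k : ℕ => Real.log n ≤ k), heavyConnSetEvent n L k) ?_ ?_⟩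
  · intro n ω hω
    simp only [Set.mem_compl_iff, Set.mem_ofPred_eq, not_forall, not_le, exists_prop] at hω
    obtain ⟨S, hS, hlog, -, hdeg⟩ := hω
    exact mem_biUnion_heavyConnSetEvent hS hlog (by exact_mod_cast hdeg)
  · have hinv : Tendsto (fun n : ℕ => ENNReal.ofReal (n : ℝ)⁻¹) atTop (nhds 0) := by
      simpa using ENNReal.tendsto_ofReal tendsto_inv_atTop_nhds_zero_nat
    exact tendsto_of_tendsto_of_tendsto_of_le_of_le tendsto_const_nhds hinv (fun _ => bot_le)
      fun n => gnp_biUnion_heavyConnSetEvent_le hd.le hL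

end
end

section
/- There exists a constant l such that for any d = d(n) with 1 ≤ d ≤ 2 ln n and p = d/n, a.a.s. every set S of vertices of G_{n,p} (not necessarily connected) with |S| ≥ n/(60d²) satisfies e(S) ≤ l·d·|S|. -/
open MeasureTheory Finset Filter

noncomputable section

attribute [local instance] Classical.propDecidable

/-! ### Auxiliary lemmas for the proof of `edges_in_large_sets` -/

lemma aux_meas_all {n : ℕ} (A : Set (Fin n → Fin n → Bool)) : MeasurableSet A :=
  A.toFinite.measurableSet

instance aux_gnp_prob (n : ℕ) (p : ℝ) : IsProbabilityMeasure (gnp n p) := by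
  unfold gnp; infer_instance

lemma aux_meas_sum {Ω : Type*} [Fintype Ω] [MeasurableSpace Ω] [MeasurableSingletonClass Ω]
    (μ : Measure Ω) (T : Finset Ω) : μ (↑T) = ∑ ω ∈ T, μ {ω} := by
  have h : (↑T : Set Ω) = ⋃ ω ∈ T, {ω} := by
    ext x; simp
  rw [h, measure_biUnion_finset]
  · intro x _ y _ hxy
    simp [Function.onFun, Set.disjoint_singleton, hxy]
  · exact fun b _ => measurableSet_singleton b

lemma aux_sum_prod_fn {ι : Type*} [Fintype ι] [DecidableEq ι] {κ : ι → Type*}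
    [∀ i, Fintype (κ i)] (g : ∀ i, κ i → ENNReal) :
    ∑ f : (∀ i, κ i), ∏ i, g i (f i) = ∏ i, ∑ b, g i b := (Fintype.prod_sum g).symm

lemma aux_bern_single (p : ℝ) (hp1 : p ≤ 1) (b : Bool) :
    bernoulliMeasure p {b} = if b then ENNReal.ofReal p else 1 - ENNReal.ofReal p := by
  rw [bernoulliMeasure, PMF.toMeasure_apply_singleton _ _ (measurableSet_singleton b)]
  have hmin : min (Real.toNNReal p) 1 = Real.toNNReal p :=
    min_eq_left (by simpa using hp1)
  rw [PMF.bernoulli_apply, hmin]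
  cases b <;> rfl

lemma aux_gnp_single {n : ℕ} (p : ℝ) (hp1 : p ≤ 1) (ω : Fin n → Fin n → Bool) :
    gnp n p {ω} = ∏ i, ∏ j, (if ω i j then ENNReal.ofReal p else 1 - ENNReal.ofReal p) := by
  have h1 : ({ω} : Set (Fin n → Fin n → Bool)) = Set.pi Set.univ (fun i => {ω i}) := by
    ext x; simp [funext_iff, Set.mem_pi]
  rw [gnp, h1, Measure.pi_pi]
  refine Finset.prod_congr rfl fun i _ => ?_
  have h2 : ({ω i} : Set (Fin n → Bool)) = Set.pi Set.univ (fun j => {ω i j}) := by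
    ext x; simp [funext_iff, Set.mem_pi]
  rw [h2, Measure.pi_pi]
  exact Finset.prod_congr rfl fun j _ => aux_bern_single p hp1 (ω i j)

lemma aux_pow_filter_card {n : ℕ} (D : Finset (Fin n × Fin n)) (c : ENNReal)
    (ω : Fin n → Fin n → Bool) :
    c ^ (D.filter fun e => ω e.1 e.2 = true).card
      = ∏ i, ∏ j, (if (i, j) ∈ D ∧ ω i j = true then c else 1) := by
  have h1 : c ^ (D.filter fun e => ω e.1 e.2 = true).card
      = ∏ e ∈ D, (if ω e.1 e.2 = true then c else 1) := by
    rw [Finset.prod_ite, Finset.prod_const, Finset.prod_const, one_pow, mul_one]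
  have h2 : ∏ e ∈ D, (if ω e.1 e.2 = true then c else 1)
      = ∏ e : Fin n × Fin n, (if e ∈ D ∧ ω e.1 e.2 = true then c else 1) := by
    rw [← Fintype.prod_ite_mem D (fun e => if ω e.1 e.2 = true then c else 1)]
    refine Fintype.prod_congr _ _ fun e => ?_
    by_cases hD : e ∈ D <;> by_cases hω : ω e.1 e.2 = true <;> simp [hD, hω]
  rw [h1, h2]
  exact Fintype.prod_prod_type
    (f := fun e : Fin n × Fin n => if e ∈ D ∧ ω e.1 e.2 = true then c else 1)

lemma aux_chernoff_key {n : ℕ} (q c : ENNReal) (hq : q ≤ 1) (D : Finset (Fin n × Fin n)) :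
    ∑ ω : Fin n → Fin n → Bool,
      (∏ i, ∏ j, (if ω i j then q else 1 - q)) *
        c ^ (D.filter fun e => ω e.1 e.2 = true).card
      = (1 - q + q * c) ^ D.card := by
  have step : ∀ ω : Fin n → Fin n → Bool,
      (∏ i, ∏ j, (if ω i j then q else 1 - q)) *
        c ^ (D.filter fun e => ω e.1 e.2 = true).card
      = ∏ i, ∏ j, ((if ω i j then q else 1 - q) *
          (if (i, j) ∈ D ∧ ω i j = true then c else 1)) := by
    intro ω
    rw [aux_pow_filter_card, ← Finset.prod_mul_distrib]
    exact Finset.prod_congr rfl fun i _ => (Finset.prod_mul_distrib).symm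
  simp_rw [step]
  rw [aux_sum_prod_fn (κ := fun _ => Fin n → Bool)
      (g := fun i v => ∏ j, ((if v j then q else 1 - q) *
        (if (i, j) ∈ D ∧ v j = true then c else 1)))]
  have inner : ∀ i : Fin n, (∑ v : Fin n → Bool, ∏ j, ((if v j then q else 1 - q) *
        (if (i, j) ∈ D ∧ v j = true then c else 1)))
      = ∏ j, (if (i, j) ∈ D then 1 - q + q * c else 1) := by
    intro i
    rw [aux_sum_prod_fn (κ := fun _ => Bool)
        (g := fun j b => (if b then q else 1 - q) * (if (i, j) ∈ D ∧ b = true then c else 1))]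
    refine Fintype.prod_congr _ _ fun j => ?_
    rw [Fintype.sum_bool]
    by_cases hD : (i, j) ∈ D
    · simp [hD, add_comm (q * c) (1 - q)]
    · simp [hD, add_comm q (1 - q), tsub_add_cancel_of_le hq]
  simp_rw [inner]
  rw [← Fintype.prod_prod_type (f := fun e : Fin n × Fin n => if e ∈ D then 1 - q + q * c else 1),
    Fintype.prod_ite_mem, Finset.prod_const]

lemma aux_markov_bound {n : ℕ} (p γ L : ℝ) (hp0 : 0 ≤ p) (hp1 : p ≤ 1) (hγ : 1 ≤ γ)
    (hL : 0 ≤ L) (D : Finset (Fin n × Fin n)) :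
    gnp n p {ω | L < ((D.filter fun e => ω e.1 e.2 = true).card : ℝ)}
      ≤ ENNReal.ofReal ((1 - p + p * γ) ^ D.card / γ ^ L) := by
  classical
  set q := ENNReal.ofReal p with hqdef
  set c := ENNReal.ofReal γ with hcdef
  have hq : q ≤ 1 := by simpa [hqdef] using ENNReal.ofReal_le_one.2 hp1
  have hc : 1 ≤ c := by
    rw [hcdef, ← ENNReal.ofReal_one]
    exact ENNReal.ofReal_le_ofReal hγ
  set Y : (Fin n → Fin n → Bool) → ℕ := fun ω => (D.filter fun e => ω e.1 e.2 = true).card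
  set T : Finset (Fin n → Fin n → Bool) := Finset.univ.filter (fun ω => L < (Y ω : ℝ))
  have hset : {ω : Fin n → Fin n → Bool | L < (Y ω : ℝ)} = (↑T : Set _) := by
    ext ω; simp [T]
  have hγL : (0:ℝ) < γ ^ L := Real.rpow_pos_of_pos (lt_of_lt_of_le one_pos hγ) L
  have hcL : c ^ (L : ℝ) = ENNReal.ofReal (γ ^ L) :=
    ENNReal.ofReal_rpow_of_pos (lt_of_lt_of_le one_pos hγ)
  have key : gnp n p (↑T) * c ^ (L:ℝ) ≤ (1 - q + q * c) ^ D.card := by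
    rw [aux_meas_sum, Finset.sum_mul]
    calc ∑ ω ∈ T, gnp n p {ω} * c ^ (L:ℝ)
        ≤ ∑ ω ∈ T, (∏ i, ∏ j, (if ω i j then q else 1 - q)) * c ^ (Y ω) := by
          refine Finset.sum_le_sum fun ω hω => ?_
          rw [aux_gnp_single p hp1]
          refine mul_le_mul_right ?_ _
          have hLY : L ≤ (Y ω : ℝ) := le_of_lt (by simpa [T] using hω)
          calc c ^ (L:ℝ) ≤ c ^ ((Y ω : ℝ)) := ENNReal.rpow_le_rpow_of_exponent_le hc hLY
            _ = c ^ (Y ω) := by rw [ENNReal.rpow_natCast]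
      _ ≤ ∑ ω : Fin n → Fin n → Bool, (∏ i, ∏ j, (if ω i j then q else 1 - q)) * c ^ (Y ω) :=
          Finset.sum_le_sum_of_subset (Finset.subset_univ T)
      _ = (1 - q + q * c) ^ D.card := aux_chernoff_key q c hq D
  have hne0 : c ^ (L:ℝ) ≠ 0 := by rw [hcL]; simpa using hγL
  have hneT : c ^ (L:ℝ) ≠ ⊤ := by rw [hcL]; exact ENNReal.ofReal_ne_top
  have hdiv : gnp n p (↑T) ≤ (1 - q + q * c) ^ D.card / c ^ (L:ℝ) :=
    (ENNReal.le_div_iff_mul_le (Or.inl hne0) (Or.inl hneT)).2 key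
  have hbase : 1 - q + q * c = ENNReal.ofReal (1 - p + p * γ) := by
    rw [hqdef, hcdef, ← ENNReal.ofReal_one, ← ENNReal.ofReal_sub _ hp0,
      ← ENNReal.ofReal_mul hp0, ← ENNReal.ofReal_add (by linarith) (by positivity)]
  rw [hset]
  refine hdiv.trans ?_
  rw [hbase, ← ENNReal.ofReal_pow (by nlinarith), hcL,
    ENNReal.ofReal_div_of_pos hγL]

lemma aux_edgesIn_le_filter {n : ℕ} (ω : Fin n → Fin n → Bool) (S : Finset (Fin n)) :
    edgesIn (graphOf ω) (↑S)
      ≤ ((((S ×ˢ S).filter (fun e : Fin n × Fin n => e.1 < e.2)).filter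
          (fun e => ω e.1 e.2 = true))).card := by
  classical
  set F := (((S ×ˢ S).filter (fun e : Fin n × Fin n => e.1 < e.2)).filter
      (fun e => ω e.1 e.2 = true)) with hF
  have hsub : {e ∈ (graphOf ω).edgeSet | ∀ v ∈ e, v ∈ (↑S : Set (Fin n))}
      ⊆ ((F.image (fun p : Fin n × Fin n => Sym2.mk p.1 p.2) : Finset (Sym2 (Fin n))) : Set (Sym2 (Fin n))) := by
    intro e he
    induction e with
    | _ a b =>
      obtain ⟨hadj, hmem⟩ := he
      rw [SimpleGraph.mem_edgeSet] at hadj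
      obtain ⟨hne, hω⟩ := hadj
      have ha : a ∈ S := by simpa using hmem a (by simp)
      have hb : b ∈ S := by simpa using hmem b (by simp)
      have hminS : min a b ∈ S := by
        rcases min_cases a b with ⟨h,_⟩|⟨h,_⟩ <;> rw [h] <;> assumption
      have hmaxS : max a b ∈ S := by
        rcases max_cases a b with ⟨h,_⟩|⟨h,_⟩ <;> rw [h] <;> assumption
      simp only [Finset.coe_image, Set.mem_image, Finset.mem_coe]
      refine ⟨(min a b, max a b), ?_, ?_⟩
      · rw [hF]
        simp only [Finset.mem_filter, Finset.mem_product]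
        exact ⟨⟨⟨hminS, hmaxS⟩, min_lt_max.2 hne⟩, hω⟩
      · rcases le_total a b with h|h
        · simp [min_eq_left h, max_eq_right h]
        · simp [min_eq_right h, max_eq_left h, Sym2.eq_swap]
  calc edgesIn (graphOf ω) (↑S)
      ≤ ((F.image (fun p : Fin n × Fin n => Sym2.mk p.1 p.2) : Finset (Sym2 (Fin n))) : Set (Sym2 (Fin n))).ncard :=
        Set.ncard_le_ncard hsub (Set.toFinite _)
    _ = (F.image (fun p : Fin n × Fin n => Sym2.mk p.1 p.2)).card := Set.ncard_coe_finset _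
    _ ≤ F.card := Finset.card_image_le

lemma aux_choose_bound (n s : ℕ) (hs : 1 ≤ s) {d : ℝ}
    (hge : (n : ℝ) ≤ 60 * d ^ 2 * s) :
    (n.choose s : ℝ) ≤ (60 * d ^ 2 * Real.exp 1) ^ s := by
  have hs0 : (0:ℝ) < s := by exact_mod_cast hs
  have h1 : (n.choose s : ℝ) ≤ (n:ℝ) ^ s / s.factorial := Nat.choose_le_pow_div s n
  have h2 : (s:ℝ) ^ s / s.factorial ≤ Real.exp s :=
    Real.pow_div_factorial_le_exp (x := (s:ℝ)) (Nat.cast_nonneg s) s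
  have hfac : (0:ℝ) < s.factorial := by exact_mod_cast s.factorial_pos
  have h3 : (s:ℝ) ^ s ≤ Real.exp s * s.factorial := by
    rw [div_le_iff₀ hfac] at h2; linarith
  have h4 : (n:ℝ) ^ s / s.factorial ≤ (n:ℝ)^s * Real.exp s / (s:ℝ)^s := by
    rw [div_le_div_iff₀ hfac (by positivity)]
    have hnn : (0:ℝ) ≤ (n:ℝ)^s := by positivity
    calc (n:ℝ)^s * (s:ℝ)^s = (n:ℝ)^s * ((s:ℝ)^s) := rfl
      _ ≤ (n:ℝ)^s * (Real.exp s * s.factorial) := by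
          exact mul_le_mul_of_nonneg_left h3 hnn
      _ = (n:ℝ)^s * Real.exp s * s.factorial := by ring
  have h5 : (n:ℝ)^s * Real.exp s / (s:ℝ)^s = ((n:ℝ)/s * Real.exp 1)^s := by
    rw [mul_pow, div_pow, ← Real.exp_nat_mul]
    ring_nf
  have h6 : (n:ℝ)/s * Real.exp 1 ≤ 60 * d^2 * Real.exp 1 := by
    have : (n:ℝ)/s ≤ 60*d^2 := by rw [div_le_iff₀ hs0]; linarith
    nlinarith [Real.exp_pos 1, Real.one_le_exp (le_refl (0:ℝ))]
  calc (n.choose s : ℝ) ≤ (n:ℝ) ^ s / s.factorial := h1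
    _ ≤ (n:ℝ)^s * Real.exp s / (s:ℝ)^s := h4
    _ = ((n:ℝ)/s * Real.exp 1)^s := h5
    _ ≤ (60 * d^2 * Real.exp 1)^s := by
        refine pow_le_pow_left₀ ?_ h6 s
        positivity

lemma aux_exp_four_ge : (21:ℝ) ≤ Real.exp 4 := by
  have h : (2.7:ℝ) ≤ Real.exp 1 := le_of_lt (by linarith [Real.exp_one_gt_d9])
  have h4 : ((2.7:ℝ))^4 ≤ (Real.exp 1)^4 := pow_le_pow_left₀ (by norm_num) h 4
  have heq : (Real.exp 1)^(4:ℕ) = Real.exp 4 := by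
    rw [← Real.exp_nat_mul]; norm_num
  rw [heq] at h4; nlinarith

set_option maxHeartbeats 2000000 in
lemma aux_per_s_bound {n s m : ℕ} {d : ℝ} (hd1 : 1 ≤ d) (hdn : d ≤ n) (hs1 : 1 ≤ s)
    (hsn : s ≤ n) (hm : m ≤ s ^ 2) (hge : (n:ℝ) ≤ 60 * d ^ 2 * s) :
    (n.choose s : ℝ) *
      ((1 - d / n + d / n * (Real.exp 4 * n / s)) ^ m
        / (Real.exp 4 * n / s) ^ ((Real.exp 4 * d * s : ℝ))) ≤ Real.exp (-(d * s)) := by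
  have hl : (21:ℝ) ≤ Real.exp 4 := aux_exp_four_ge
  have hs0 : (0:ℝ) < s := by exact_mod_cast hs1
  have hn0 : (0:ℝ) < n := lt_of_lt_of_le hs0 (by exact_mod_cast hsn)
  set p : ℝ := d / n with hp
  set γ : ℝ := Real.exp 4 * n / s with hγ
  set L : ℝ := Real.exp 4 * d * s with hLdef
  have hL0 : 0 ≤ L := by positivity
  have hγl : Real.exp 4 ≤ γ := by
    rw [hγ, mul_div_assoc]
    nlinarith [(by rw [le_div_iff₀ hs0, one_mul]; exact_mod_cast hsn : (1:ℝ) ≤ (n:ℝ)/s),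
      Real.exp_pos 4]
  have hγ0 : (0:ℝ) < γ := lt_of_lt_of_le (by positivity) hγl
  have hp0 : 0 ≤ p := by positivity
  have hp1 : p ≤ 1 := by rw [hp, div_le_one hn0]; exact hdn
  have hpγ : 0 ≤ p * γ := by positivity
  have hbase : 0 ≤ 1 - p + p * γ := by nlinarith
  have hnum : (1 - p + p * γ) ^ m ≤ Real.exp L := by
    have h1 : 1 - p + p * γ ≤ Real.exp (p * γ) := by
      nlinarith [Real.add_one_le_exp (p * γ)]
    calc (1 - p + p * γ) ^ m ≤ (Real.exp (p * γ)) ^ m := pow_le_pow_left₀ hbase h1 m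
      _ = Real.exp (m * (p * γ)) := by rw [Real.exp_nat_mul]
      _ ≤ Real.exp L := by
          refine Real.exp_le_exp.2 ?_
          have hmle : (m:ℝ) ≤ (s:ℝ)^2 := by exact_mod_cast hm
          have heq : (s:ℝ)^2 * (p * γ) = L := by
            rw [hp, hγ, hLdef]; field_simp
          nlinarith
  have hden : Real.exp (4 * L) ≤ γ ^ L := by
    have h1 : (Real.exp 4) ^ L ≤ γ ^ L :=
      Real.rpow_le_rpow (Real.exp_pos 4).le hγl hL0
    calc Real.exp (4 * L) = (Real.exp 4) ^ L := by
          rw [Real.rpow_def_of_pos (Real.exp_pos 4), Real.log_exp]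
      _ ≤ γ ^ L := h1
  have hfrac : (1 - p + p * γ) ^ m / γ ^ L ≤ Real.exp (-(3 * L)) := by
    calc (1 - p + p * γ) ^ m / γ ^ L ≤ Real.exp L / Real.exp (4 * L) :=
          div_le_div₀ (Real.exp_pos L).le hnum (Real.exp_pos _) hden
      _ = Real.exp (-(3 * L)) := by rw [← Real.exp_sub]; ring_nf
  have hchoose : (n.choose s : ℝ) ≤ (60 * d ^ 2 * Real.exp 1) ^ s :=
    aux_choose_bound n s hs1 hge
  have hcount : ((60:ℝ) * d ^ 2 * Real.exp 1) ^ s ≤ Real.exp ((59 + 2 * d) * s) := by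
    have h60 : (60:ℝ) ≤ Real.exp 60 := by linarith [Real.add_one_le_exp (60:ℝ)]
    have hd2 : d ^ 2 ≤ Real.exp (2 * (d - 1)) := by
      have hde : d ≤ Real.exp (d - 1) := by linarith [Real.add_one_le_exp (d - 1)]
      calc d^2 = d * d := sq d
        _ ≤ Real.exp (d-1) * Real.exp (d-1) := by nlinarith [Real.exp_pos (d-1)]
        _ = Real.exp (2 * (d-1)) := by rw [← Real.exp_add]; ring_nf
    have hbb : (60:ℝ) * d ^ 2 * Real.exp 1 ≤ Real.exp (59 + 2 * d) := by
      have heq : Real.exp 60 * Real.exp (2 * (d-1)) * Real.exp 1 = Real.exp (59 + 2 * d) := by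
        rw [← Real.exp_add, ← Real.exp_add]; ring_nf
      have hstep : (60:ℝ) * d ^ 2 * Real.exp 1
          ≤ Real.exp 60 * Real.exp (2 * (d-1)) * Real.exp 1 := by
        refine mul_le_mul_of_nonneg_right ?_ (Real.exp_pos 1).le
        exact mul_le_mul h60 hd2 (by positivity) (Real.exp_pos 60).le
      linarith
    calc ((60:ℝ) * d ^ 2 * Real.exp 1) ^ s ≤ (Real.exp (59 + 2 * d)) ^ s :=
          pow_le_pow_left₀ (by positivity) hbb s
      _ = Real.exp ((59 + 2 * d) * s) := by rw [← Real.exp_nat_mul]; ring_nf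
  calc (n.choose s : ℝ) * ((1 - p + p * γ) ^ m / γ ^ L)
      ≤ Real.exp ((59 + 2*d) * s) * Real.exp (-(3 * L)) := by
        refine mul_le_mul (hchoose.trans hcount) hfrac ?_ (Real.exp_pos _).le
        exact div_nonneg (pow_nonneg hbase _) (Real.rpow_nonneg hγ0.le _)
    _ = Real.exp ((59 + 2*d) * s - 3 * L) := by rw [← Real.exp_add]; ring_nf
    _ ≤ Real.exp (-(d * s)) := by
        refine Real.exp_le_exp.2 ?_
        rw [hLdef]
        have h1 : (0:ℝ) ≤ (Real.exp 4 - 21) * (d * s) := by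
          apply mul_nonneg (by linarith) (by positivity)
        have h2 : (0:ℝ) ≤ (d - 1) * s := mul_nonneg (by linarith) hs0.le
        nlinarith [h1, h2]

lemma aux_log_le_two_sqrt {x : ℝ} (hx : 1 ≤ x) : Real.log x ≤ 2 * Real.sqrt x := by
  have h0 : (0:ℝ) < x := lt_of_lt_of_le one_pos hx
  have h1 : Real.log (Real.sqrt x) ≤ Real.sqrt x - 1 :=
    Real.log_le_sub_one_of_pos (Real.sqrt_pos.2 h0)
  rw [Real.log_sqrt h0.le] at h1
  linarith [Real.sqrt_nonneg x]

lemma aux_two_log_le {n : ℕ} (hn : 16 ≤ n) : 2 * Real.log n ≤ n := by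
  have hn1 : (16:ℝ) ≤ n := by exact_mod_cast hn
  have h1 : Real.log n ≤ 2 * Real.sqrt n := aux_log_le_two_sqrt (by linarith)
  have h4 : (4:ℝ) ≤ Real.sqrt n := by
    rw [show (4:ℝ) = Real.sqrt 16 by
      rw [show (16:ℝ) = 4^2 by norm_num, Real.sqrt_sq]; norm_num]
    exact Real.sqrt_le_sqrt hn1
  have h5 : Real.sqrt n * Real.sqrt n = n := Real.mul_self_sqrt (by linarith)
  nlinarith

set_option maxHeartbeats 2000000 in
lemma aux_main_bound {n : ℕ} {d : ℝ} (hn : 16 ≤ n) (hd1 : 1 ≤ d)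
    (hdl : d ≤ 2 * Real.log n) :
    gnp n (d / n) {ω | ¬ ∀ S : Finset (Fin n), (n:ℝ)/(60 * d^2) ≤ S.card →
        (edgesIn (graphOf ω) ↑S : ℝ) ≤ Real.exp 4 * d * S.card}
      ≤ ENNReal.ofReal (((n:ℝ)+1) * Real.exp (-((n:ℝ)/(120 * Real.log n)))) := by
  classical
  have hn0 : (0:ℝ) < n := by
    have h16 : (16:ℝ) ≤ n := by exact_mod_cast hn
    linarith
  have hlog0 : 0 < Real.log n := Real.log_pos (by
    have h16 : (16:ℝ) ≤ n := by exact_mod_cast hn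
    linarith)
  have hd0 : (0:ℝ) < d := lt_of_lt_of_le one_pos hd1
  have hdn : d ≤ n := hdl.trans (aux_two_log_le hn)
  set p : ℝ := d / n with hpdef
  have hp0 : 0 ≤ p := by positivity
  have hp1 : p ≤ 1 := by rw [hpdef, div_le_one hn0]; exact hdn
  set γ : ℕ → ℝ := fun s => Real.exp 4 * n / s with hγdef
  set L : ℕ → ℝ := fun s => Real.exp 4 * d * s with hLdef
  set f : ℕ → ℝ := fun s => (1 - p + p * γ s) ^ (s ^ 2) / (γ s) ^ (L s) with hfdef
  have hfnn : ∀ s, 0 ≤ f s := by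
    intro s
    have hγnn : 0 ≤ γ s := by rw [hγdef]; positivity
    have hbase : (0:ℝ) ≤ 1 - p + p * γ s := by nlinarith
    exact div_nonneg (pow_nonneg hbase _) (Real.rpow_nonneg hγnn _)
  set D : Finset (Fin n) → Finset (Fin n × Fin n) :=
    fun S => (S ×ˢ S).filter (fun e : Fin n × Fin n => e.1 < e.2) with hDdef
  set 𝒮 : Finset (Finset (Fin n)) :=
    Finset.univ.filter (fun S : Finset (Fin n) => (n:ℝ)/(60*d^2) ≤ S.card) with h𝒮def
  set A : Finset (Fin n) → Set (Fin n → Fin n → Bool) := fun S =>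
    {ω | Real.exp 4 * d * S.card <
      (((D S).filter fun e => ω e.1 e.2 = true).card : ℝ)} with hAdef
  have hmem : ∀ S ∈ 𝒮, 1 ≤ S.card ∧ S.card ≤ n ∧ (n:ℝ) ≤ 60 * d^2 * S.card := by
    intro S hS
    rw [h𝒮def, Finset.mem_filter] at hS
    have hge : (n:ℝ)/(60*d^2) ≤ S.card := hS.2
    have hpos : (0:ℝ) < (n:ℝ)/(60*d^2) := by positivity
    have hcard0 : (0:ℝ) < S.card := lt_of_lt_of_le hpos hge
    have h1 : 1 ≤ S.card := by exact_mod_cast hcard0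
    have h2 : S.card ≤ n := by
      simpa using (Finset.card_le_univ S)
    have h3 : (n:ℝ) ≤ 60 * d^2 * S.card := by
      rw [div_le_iff₀ (by positivity : (0:ℝ) < 60*d^2)] at hge
      linarith
    exact ⟨h1, h2, h3⟩
  have step1 : gnp n p {ω | ¬ ∀ S : Finset (Fin n), (n:ℝ)/(60 * d^2) ≤ S.card →
        (edgesIn (graphOf ω) ↑S : ℝ) ≤ Real.exp 4 * d * S.card}
      ≤ ∑ S ∈ 𝒮, gnp n p (A S) := by
    refine le_trans (measure_mono ?_) (measure_biUnion_finset_le _ _)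
    intro ω hω
    simp only [Set.mem_setOf_eq] at hω
    push_neg at hω
    obtain ⟨S, hge, hlt⟩ := hω
    have hSmem : S ∈ 𝒮 := by
      rw [h𝒮def]; simp only [Finset.mem_filter, Finset.mem_univ, true_and]
      exact hge
    have hωA : ω ∈ A S := by
      rw [hAdef]
      simp only [Set.mem_setOf_eq]
      refine lt_of_lt_of_le hlt ?_
      exact_mod_cast aux_edgesIn_le_filter ω S
    exact Set.mem_biUnion hSmem hωA
  have step2 : ∀ S ∈ 𝒮, gnp n p (A S) ≤ ENNReal.ofReal (f S.card) := by
    intro S hS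
    obtain ⟨hs1, hsn, hge⟩ := hmem S hS
    have hscard0 : (0:ℝ) < S.card := by exact_mod_cast hs1
    have hγ1 : 1 ≤ γ S.card := by
      rw [hγdef]
      have hns : (1:ℝ) ≤ (n:ℝ)/S.card := by
        rw [le_div_iff₀ hscard0, one_mul]; exact_mod_cast hsn
      calc (1:ℝ) ≤ Real.exp 4 := by linarith [aux_exp_four_ge]
        _ = Real.exp 4 * 1 := (mul_one _).symm
        _ ≤ Real.exp 4 * ((n:ℝ)/S.card) := by
            refine mul_le_mul_of_nonneg_left hns (Real.exp_pos 4).le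
        _ = Real.exp 4 * n / S.card := by ring
    have hL0 : 0 ≤ L S.card := by rw [hLdef]; positivity
    have hbase1 : (1:ℝ) ≤ 1 - p + p * γ S.card := by nlinarith
    have hmb := aux_markov_bound (n := n) p (γ S.card) (L S.card) hp0 hp1 hγ1 hL0 (D S)
    have hAeq : A S = {ω | L S.card <
        (((D S).filter fun e => ω e.1 e.2 = true).card : ℝ)} := by
      rw [hAdef, hLdef]
    rw [hAeq]
    refine hmb.trans (ENNReal.ofReal_le_ofReal ?_)
    rw [hfdef]
    have hcard : (D S).card ≤ S.card ^ 2 := by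
      calc (D S).card ≤ (S ×ˢ S).card := by rw [hDdef]; exact Finset.card_filter_le _ _
        _ = S.card ^ 2 := by rw [Finset.card_product, sq]
    exact (div_le_div_iff_of_pos_right (Real.rpow_pos_of_pos (lt_of_lt_of_le one_pos hγ1) _)).2
      (pow_le_pow_right₀ hbase1 hcard)
  set E : ℝ := Real.exp (-((n:ℝ)/(120 * Real.log n))) with hEdef
  have hreal : ∑ S ∈ 𝒮, f S.card ≤ ((n:ℝ)+1) * E := by
    have hgroup : ∑ S ∈ 𝒮, f S.card
        = ∑ k ∈ Finset.range (n+1), ∑ S ∈ 𝒮.filter (fun S => S.card = k), f S.card := by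
      refine (Finset.sum_fiberwise_of_maps_to (fun S _ => ?_) _).symm
      rw [Finset.mem_range]
      exact Nat.lt_succ_of_le (by simpa using Finset.card_le_univ S)
    have hterm : ∀ k ∈ Finset.range (n+1),
        (∑ S ∈ 𝒮.filter (fun S => S.card = k), f S.card) ≤ E := by
      intro k hk
      rcases (𝒮.filter (fun S => S.card = k)).eq_empty_or_nonempty with he | ⟨S₀, hS₀⟩
      · rw [he, Finset.sum_empty, hEdef]
        exact (Real.exp_pos _).le
      · have h₀ := Finset.mem_filter.1 hS₀
        obtain ⟨hk1, hkn, hkge⟩ := hmem S₀ h₀.1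
        rw [h₀.2] at hk1 hkn hkge
        have hinner : ∑ S ∈ 𝒮.filter (fun S => S.card = k), f S.card
            = ((𝒮.filter (fun S => S.card = k)).card : ℝ) * f k := by
          rw [Finset.sum_congr rfl (fun S hS => by rw [(Finset.mem_filter.1 hS).2]),
            Finset.sum_const, nsmul_eq_mul]
        have hcount : ((𝒮.filter (fun S => S.card = k)).card : ℝ) ≤ (n.choose k : ℝ) := by
          have hsub : 𝒮.filter (fun S => S.card = k) ⊆ Finset.powersetCard k Finset.univ := by
            intro S hS
            rw [Finset.mem_powersetCard_univ]
            exact (Finset.mem_filter.1 hS).2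
          have hle := Finset.card_le_card hsub
          rw [Finset.card_powersetCard, Finset.card_univ, Fintype.card_fin] at hle
          exact_mod_cast hle
        have hper : (n.choose k : ℝ) * f k ≤ Real.exp (-(d * k)) := by
          have hp := aux_per_s_bound (n := n) (s := k) (m := k^2) hd1 hdn hk1 hkn
            (le_refl _) hkge
          rw [hfdef, hγdef, hLdef, hpdef]
          exact hp
        have hfk : 0 ≤ f k := hfnn k
        have hEcmp : Real.exp (-(d * k)) ≤ E := by
          rw [hEdef]
          refine Real.exp_le_exp.2 (neg_le_neg ?_)
          have h1 : (n:ℝ)/(120 * Real.log n) ≤ (n:ℝ)/(60 * d) := by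
            refine div_le_div_of_nonneg_left hn0.le (by positivity) ?_
            linarith
          have h2 : (n:ℝ)/(60 * d) ≤ d * k := by
            rw [div_le_iff₀ (by positivity : (0:ℝ) < 60 * d)]
            nlinarith
          linarith
        calc ∑ S ∈ 𝒮.filter (fun S => S.card = k), f S.card
            = ((𝒮.filter (fun S => S.card = k)).card : ℝ) * f k := hinner
          _ ≤ (n.choose k : ℝ) * f k := mul_le_mul_of_nonneg_right hcount hfk
          _ ≤ Real.exp (-(d * k)) := hper
          _ ≤ E := hEcmp
    calc ∑ S ∈ 𝒮, f S.card
        = ∑ k ∈ Finset.range (n+1), ∑ S ∈ 𝒮.filter (fun S => S.card = k), f S.card := hgroup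
      _ ≤ (Finset.range (n+1)).card • E := Finset.sum_le_card_nsmul _ _ E hterm
      _ = ((n:ℝ)+1) * E := by rw [Finset.card_range, nsmul_eq_mul]; push_cast; ring
  calc gnp n p {ω | ¬ ∀ S : Finset (Fin n), (n:ℝ)/(60 * d^2) ≤ S.card →
        (edgesIn (graphOf ω) ↑S : ℝ) ≤ Real.exp 4 * d * S.card}
      ≤ ∑ S ∈ 𝒮, gnp n p (A S) := step1
    _ ≤ ∑ S ∈ 𝒮, ENNReal.ofReal (f S.card) := Finset.sum_le_sum step2
    _ = ENNReal.ofReal (∑ S ∈ 𝒮, f S.card) :=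
        (ENNReal.ofReal_sum_of_nonneg (fun S _ => hfnn _)).symm
    _ ≤ ENNReal.ofReal (((n:ℝ)+1) * E) := ENNReal.ofReal_le_ofReal hreal

lemma aux_B_tendsto :
    Tendsto (fun n : ℕ => ((n:ℝ)+1) * Real.exp (-((n:ℝ)/(120 * Real.log n))))
    atTop (nhds 0) := by
  have hub : ∀ᶠ n : ℕ in atTop,
      ((n:ℝ)+1) * Real.exp (-((n:ℝ)/(120 * Real.log n))) ≤ 1 / (n:ℝ) := by
    filter_upwards [eventually_ge_atTop (5760^2 : ℕ)] with n hn
    have hn2 : (5760:ℝ)^2 ≤ (n:ℝ) := by exact_mod_cast hn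
    have hn0 : (0:ℝ) < n := by nlinarith
    have hn1 : (1:ℝ) < n := by nlinarith
    have hlog0 : 0 < Real.log n := Real.log_pos hn1
    have hsq : Real.sqrt n * Real.sqrt n = (n:ℝ) := Real.mul_self_sqrt hn0.le
    have hsqrt_ge : (5760:ℝ) ≤ Real.sqrt n := by
      rw [show (5760:ℝ) = Real.sqrt (5760^2) by rw [Real.sqrt_sq]; norm_num]
      exact Real.sqrt_le_sqrt hn2
    set y := Real.sqrt (Real.sqrt n) with hy
    have hy0 : 0 ≤ y := Real.sqrt_nonneg _
    have hy2 : y * y = Real.sqrt n := Real.mul_self_sqrt (Real.sqrt_nonneg _)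
    have hlogy : Real.log n = 4 * Real.log y := by
      rw [hy, Real.log_sqrt (Real.sqrt_nonneg _), Real.log_sqrt hn0.le]; ring
    have hylog : Real.log n ≤ 4 * y := by
      have hypos : 0 < y := Real.sqrt_pos.2 (Real.sqrt_pos.2 hn0)
      have h1 : Real.log y ≤ y - 1 := Real.log_le_sub_one_of_pos hypos
      linarith [hlogy]
    have hlogsq : 360 * Real.log n ^ 2 ≤ (n:ℝ) := by
      have h1 : Real.log n ^ 2 ≤ 16 * (y * y) := by nlinarith
      have h2 : 360 * (16 * Real.sqrt n) ≤ Real.sqrt n * Real.sqrt n := by nlinarith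
      calc 360 * Real.log n ^ 2 ≤ 360 * (16 * (y*y)) := by nlinarith
        _ = 360 * (16 * Real.sqrt n) := by rw [hy2]
        _ ≤ Real.sqrt n * Real.sqrt n := h2
        _ = (n:ℝ) := hsq
    have hu : 3 * Real.log n ≤ (n:ℝ)/(120 * Real.log n) := by
      rw [le_div_iff₀ (by positivity)]
      nlinarith
    have hexp : (n:ℝ)^3 ≤ Real.exp ((n:ℝ)/(120 * Real.log n)) := by
      calc (n:ℝ)^3 = Real.exp (3 * Real.log n) := by
            rw [show 3 * Real.log n = Real.log n + Real.log n + Real.log n by ring,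
              Real.exp_add, Real.exp_add, Real.exp_log hn0]; ring
        _ ≤ _ := Real.exp_le_exp.2 hu
    rw [Real.exp_neg]
    rw [div_eq_mul_inv (1:ℝ)]
    have hexp0 : (0:ℝ) < Real.exp ((n:ℝ)/(120 * Real.log n)) := Real.exp_pos _
    have hkey : ((n:ℝ)+1) * (n:ℝ) ≤ Real.exp ((n:ℝ)/(120 * Real.log n)) := by
      nlinarith
    calc ((n:ℝ)+1) * (Real.exp ((n:ℝ)/(120 * Real.log n)))⁻¹
        ≤ ((n:ℝ)+1) * (((n:ℝ)+1) * (n:ℝ))⁻¹ := by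
          refine mul_le_mul_of_nonneg_left ?_ (by positivity)
          exact inv_anti₀ (by positivity) hkey
      _ = 1 * ((n:ℝ))⁻¹ := by field_simp
      _ = 1 / (n:ℝ) := by rw [one_mul, one_div]
  have hlb : ∀ᶠ n : ℕ in atTop,
      (0:ℝ) ≤ ((n:ℝ)+1) * Real.exp (-((n:ℝ)/(120 * Real.log n))) := by
    filter_upwards [eventually_ge_atTop 1] with n _
    positivity
  exact squeeze_zero' hlb hub tendsto_one_div_atTop_nhds_zero_nat

/-- There is a constant `l` such that for `1 ≤ d ≤ 2 ln n` and `p = d/n`,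
a.a.s. every (not necessarily connected) set `S` with `|S| ≥ n/(60 d²)` satisfies
`e(S) ≤ l d |S|`. -/
theorem edges_in_large_sets :
    ∃ l : ℝ, 0 < l ∧ ∀ d : ℕ → ℝ,
      (∀ᶠ n : ℕ in atTop, 1 ≤ d n ∧ d n ≤ 2 * Real.log n) →
      Tendsto (fun n : ℕ =>
        gnp n (d n / n) {ω | ∀ S : Finset (Fin n),
          (n : ℝ) / (60 * (d n) ^ 2) ≤ (S.card : ℝ) →
          (edgesIn (graphOf ω) (S : Set (Fin n)) : ℝ) ≤ l * d n * S.card})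
        atTop (nhds 1) := by
  refine ⟨Real.exp 4, Real.exp_pos 4, ?_⟩
  intro d hd
  have key : ∀ᶠ n : ℕ in atTop,
      (1:ENNReal) - ENNReal.ofReal (((n:ℝ)+1) * Real.exp (-((n:ℝ)/(120 * Real.log n))))
        ≤ gnp n (d n / n) {ω | ∀ S : Finset (Fin n),
            (n : ℝ) / (60 * (d n) ^ 2) ≤ (S.card : ℝ) →
            (edgesIn (graphOf ω) (S : Set (Fin n)) : ℝ) ≤ Real.exp 4 * d n * S.card} := by
    filter_upwards [hd, eventually_ge_atTop 16] with n hdn hn16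
    have hcompl : {ω : Fin n → Fin n → Bool | ∀ S : Finset (Fin n),
          (n : ℝ) / (60 * (d n) ^ 2) ≤ (S.card : ℝ) →
          (edgesIn (graphOf ω) (S : Set (Fin n)) : ℝ) ≤ Real.exp 4 * d n * S.card}
        = {ω : Fin n → Fin n → Bool | ¬ ∀ S : Finset (Fin n),
          (n : ℝ) / (60 * (d n) ^ 2) ≤ (S.card : ℝ) →
          (edgesIn (graphOf ω) (S : Set (Fin n)) : ℝ) ≤ Real.exp 4 * d n * S.card}ᶜ := by
      ext ω; simp
    rw [hcompl, measure_compl (aux_meas_all _) (measure_ne_top _ _), measure_univ]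
    exact tsub_le_tsub_left (aux_main_bound hn16 hdn.1 hdn.2) 1
  have hup : ∀ n : ℕ, gnp n (d n / n) {ω | ∀ S : Finset (Fin n),
      (n : ℝ) / (60 * (d n) ^ 2) ≤ (S.card : ℝ) →
      (edgesIn (graphOf ω) (S : Set (Fin n)) : ℝ) ≤ Real.exp 4 * d n * S.card} ≤ 1 :=
    fun n => prob_le_one
  have hB : Tendsto (fun n : ℕ =>
      ENNReal.ofReal (((n:ℝ)+1) * Real.exp (-((n:ℝ)/(120 * Real.log n))))) atTop (nhds 0) := by
    have h := (ENNReal.continuous_ofReal.tendsto (0:ℝ)).comp aux_B_tendsto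
    simpa [Function.comp_def] using h
  have hlow : Tendsto (fun n : ℕ =>
      (1:ENNReal) - ENNReal.ofReal (((n:ℝ)+1) * Real.exp (-((n:ℝ)/(120 * Real.log n)))))
      atTop (nhds 1) := by
    have := ENNReal.Tendsto.sub (tendsto_const_nhds (x := (1:ENNReal))) hB
      (Or.inl (by simp))
    simpa using this
  exact tendsto_of_tendsto_of_tendsto_of_le_of_le' hlow tendsto_const_nhds key
    (Eventually.of_forall hup)


end
end
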